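/- arXiv:1409.3943 — 12 statements merged into one kernel-verified Lean document; each statement's English description precedes it below -/
import Mathlib

section
/- Define L_k = { w ∈ L_{k-1} | w can be embedded into R_{k-1} } and R_k = { w ∈ R_{k-1} | w can be embedded into L_k } for languages L_0, R_0 over a finite alphabet. Then there exists a constant B ≥ 1 such that L_B = L_{B+1} and R_B = R_{B+1}. -/
/-!
Each `L (k + 1)` is closed downwards inside `L k`: if `w ∈ L k` is a subsequence of
`v ∈ L (k + 1)`, then `w` embeds into whatever word of `R k` the word `v` embeds into, so
`w ∈ L (k + 1)`. A strictly decreasing chain of sets with this property yields a sequence of words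
`f k ∈ L k \ L (k + 1)` with no `f m` embedded in a later `f n`, i.e. a bad sequence, which
Higman's lemma forbids. Once `L` is stationary, `R` is too, since it is cut by the same condition.
-/

theorem List.wellQuasiOrdered_sublist (α : Type*) [Finite α] :
    WellQuasiOrdered (fun l₁ l₂ : List α => l₁.Sublist l₂) := by
  have higman := (Set.partiallyWellOrderedOn_univ_iff.mpr
    (Finite.wellQuasiOrdered (α := α) (· = ·))).partiallyWellOrderedOn_sublistForall₂ (· = ·)
  simp only [Set.mem_univ, implies_true, Set.ofPred_true,
    Set.partiallyWellOrderedOn_univ_iff] at higman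
  convert higman using 3
  simp only [List.sublistForall₂_iff, List.forall₂_eq_eq_eq, exists_eq_left']

theorem Antitone.exists_eq_succ_of_wellQuasiOrdered {β : Type*} {r : β → β → Prop}
    (hr : WellQuasiOrdered r) {L : ℕ → Set β} (hL : Antitone L)
    (hclosed : ∀ k, ∀ w ∈ L k, ∀ v ∈ L (k + 1), r w v → w ∈ L (k + 1)) :
    ∃ k, L k = L (k + 1) := by
  by_contra! hne
  have hdrop : ∀ k, ∃ w ∈ L k, w ∉ L (k + 1) := fun k =>
    Set.not_subset.mp fun hsub => hne k (hsub.antisymm (hL k.le_succ))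
  choose f hf_mem hf_not_mem using hdrop
  obtain ⟨m, n, hmn, hrel⟩ := hr f
  exact hf_not_mem m (hclosed m _ (hf_mem m) _ (hL hmn (hf_mem n)) hrel)

theorem sequence_stabilizes {α : Type*} [Fintype α]
    (L R : ℕ → Set (List α))
    (hL : ∀ k, L (k + 1) = {w ∈ L k | ∃ u ∈ R k, w.Sublist u})
    (hR : ∀ k, R (k + 1) = {w ∈ R k | ∃ u ∈ L (k + 1), w.Sublist u}) :
    ∃ B : ℕ, 1 ≤ B ∧ L B = L (B + 1) ∧ R B = R (B + 1) := by
  have hL_anti : Antitone L :=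
    antitone_nat_of_succ_le fun k => (hL k).symm ▸ Set.sep_subset _ _
  have hclosed : ∀ k, ∀ w ∈ L k, ∀ v ∈ L (k + 1), w.Sublist v → w ∈ L (k + 1) := by
    intro k w hw v hv hwv
    rw [hL k] at hv ⊢
    obtain ⟨-, u, hu, hvu⟩ := hv
    exact ⟨hw, u, hu, hwv.trans hvu⟩
  have hL_shift_anti : Antitone fun k => L (k + 1) := fun _ _ h => hL_anti (Nat.succ_le_succ h)
  obtain ⟨k, hk : L (k + 1) = L (k + 1 + 1)⟩ :=
    hL_shift_anti.exists_eq_succ_of_wellQuasiOrdered (List.wellQuasiOrdered_sublist α)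
      fun k => hclosed (k + 1)
  refine ⟨k + 1, Nat.le_add_left 1 k, hk, ?_⟩
  rw [hR (k + 1), ← hk, eq_comm, Set.sep_eq_self_iff_mem_true]
  intro w hw
  exact (hR k ▸ hw).2
end

section
/- Let L_0, R_0 be disjoint languages and define L_k, R_k as the iterated mutual embeddings. If L_B = L_{B+1} = ⋯ and R_B = R_{B+1} = ⋯ and there is no infinite alternating subsequence tower between L_0 and R_0, then L_B = R_B = ∅. -/
/-!
Stabilization at stage `B` says that every word of `L B` embeds into a word of `R B` and vice
versa. Since `L B ⊆ L 0` and `R B ⊆ R 0` are disjoint, starting from any word of `L B ∪ R B` and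
repeatedly passing to a superword on the other side produces an infinite alternating tower.
-/

/-- An infinite alternating subsequence tower between `K` and `L`. -/
def InfSubTower {α : Type*} (K L : Set (List α)) (w : ℕ → List α) : Prop :=
  w 0 ∈ K ∪ L ∧
    ∀ i, (w i).Sublist (w (i + 1)) ∧
      (w i ∈ K → w (i + 1) ∈ L) ∧ (w i ∈ L → w (i + 1) ∈ K)

theorem exists_seq_of_forall_mem_exists {β : Type*} {S : Set β} {r : β → β → Prop}
    (h : ∀ x ∈ S, ∃ y ∈ S, r x y) {x₀ : β} (hx₀ : x₀ ∈ S) :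
    ∃ f : ℕ → β, f 0 = x₀ ∧ ∀ n, r (f n) (f (n + 1)) := by
  choose g hgS hgr using h
  let f : ℕ → S := fun n =>
    Nat.rec (motive := fun _ => S) ⟨x₀, hx₀⟩ (fun _ x => ⟨g x x.2, hgS x x.2⟩) n
  exact ⟨fun n => f n, rfl, fun n => hgr (f n) (f n).2⟩

theorem exists_infSubTower_of_mutually_embedding {α : Type*} {K L K' L' : Set (List α)}
    (hdisj : Disjoint K L) (hK' : K' ⊆ K) (hL' : L' ⊆ L)
    (hK'L' : ∀ w ∈ K', ∃ u ∈ L', w.Sublist u) (hL'K' : ∀ w ∈ L', ∃ u ∈ K', w.Sublist u)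
    {w₀ : List α} (hw₀ : w₀ ∈ K' ∪ L') :
    ∃ t, InfSubTower K L t := by
  have step : ∀ w ∈ K' ∪ L', ∃ u ∈ K' ∪ L',
      w.Sublist u ∧ (w ∈ K → u ∈ L) ∧ (w ∈ L → u ∈ K) := by
    rintro w (hw | hw)
    · obtain ⟨u, hu, hwu⟩ := hK'L' w hw
      exact ⟨u, .inr hu, hwu, fun _ => hL' hu,
        fun hwL => (hdisj.notMem_of_mem_left (hK' hw) hwL).elim⟩
    · obtain ⟨u, hu, hwu⟩ := hL'K' w hw
      exact ⟨u, .inl hu, hwu, fun hwK => (hdisj.notMem_of_mem_left hwK (hL' hw)).elim,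
        fun _ => hK' hu⟩
  obtain ⟨t, ht0, ht⟩ := exists_seq_of_forall_mem_exists step hw₀
  exact ⟨t, ht0 ▸ Set.union_subset_union hK' hL' hw₀, ht⟩

theorem stabilized_languages_empty {α : Type*}
    (L R : ℕ → Set (List α)) (B : ℕ)
    (hdisj : Disjoint (L 0) (R 0))
    (hL : ∀ k, L (k + 1) = {w ∈ L k | ∃ u ∈ R k, w.Sublist u})
    (hR : ∀ k, R (k + 1) = {w ∈ R k | ∃ u ∈ L (k + 1), w.Sublist u})
    (hLstab : ∀ k, B ≤ k → L k = L B)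
    (hRstab : ∀ k, B ≤ k → R k = R B)
    (htower : ¬ ∃ t : ℕ → List α, InfSubTower (L 0) (R 0) t) :
    L B = ∅ ∧ R B = ∅ := by
  have hLanti : Antitone L := antitone_nat_of_succ_le fun k => by rw [hL k]; exact fun _ hw => hw.1
  have hRanti : Antitone R := antitone_nat_of_succ_le fun k => by rw [hR k]; exact fun _ hw => hw.1
  have hLR : ∀ w ∈ L B, ∃ u ∈ R B, w.Sublist u := by
    intro w hw
    rw [← hLstab (B + 1) B.le_succ, hL B] at hw
    exact hw.2
  have hRL : ∀ w ∈ R B, ∃ u ∈ L B, w.Sublist u := by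
    intro w hw
    rw [← hRstab (B + 1) B.le_succ, hR B, hLstab (B + 1) B.le_succ] at hw
    exact hw.2
  rw [← Set.union_empty_iff, ← Set.not_nonempty_iff_eq_empty]
  rintro ⟨w, hw⟩
  exact htower (exists_infSubTower_of_mutually_embedding hdisj (hLanti B.zero_le)
    (hRanti B.zero_le) hLR hRL hw)
end

section
/- Let L_0, R_0 be languages with no infinite alternating subsequence tower between them, and let the sequence L_k, R_k stabilize at L_B = R_B = ∅. Define S_k = up(R_0 \ R_k) \ up(L_0 \ L_k) and S = the union of S_k for k = 1,…,B. Then L_0 ∩ S = ∅ and R_0 ⊆ S. -/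
/-- The upward closure of a language: all supersequences of its strings. -/
def up {α : Type*} (K : Set (List α)) : Set (List α) :=
  {w | ∃ v ∈ K, v.Sublist w}

theorem exists_lt_and_not_succ_of_zero {p : ℕ → Prop} {k : ℕ} (h0 : p 0) (hk : ¬ p k) :
    ∃ j < k, p j ∧ ¬ p (j + 1) := by
  induction k with
  | zero => exact absurd h0 hk
  | succ k ih =>
    by_cases hpk : p k
    · exact ⟨k, k.lt_succ_self, hpk, hk⟩
    · obtain ⟨j, hj, h⟩ := ih hpk
      exact ⟨j, hj.trans k.lt_succ_self, h⟩

section UpwardClosure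

variable {α : Type*} {K K' : Set (List α)}

theorem subset_up : K ⊆ up K := fun w hw => ⟨w, hw, List.Sublist.refl w⟩

theorem mem_of_notMem_up_diff {w : List α} (hw : w ∈ K) (hw' : w ∉ up (K \ K')) : w ∈ K' := by
  by_contra h
  exact hw' (subset_up ⟨hw, h⟩)

end UpwardClosure

section Refinement

variable {α : Type*} {L R : ℕ → Set (List α)}

theorem antitone_of_succ_eq_sep {P : ℕ → List α → Prop} (h : ∀ k, L (k + 1) = {w ∈ L k | P k w}) :
    Antitone L :=
  antitone_nat_of_succ_le fun k => by rw [h k]; exact fun _ hw => hw.1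

theorem disjoint_up_diff_right_left
    (hL : ∀ k, L (k + 1) = {w ∈ L k | ∃ u ∈ R k, w.Sublist u})
    (hR : ∀ k, R (k + 1) = {w ∈ R k | ∃ u ∈ L (k + 1), w.Sublist u}) (k : ℕ) : Disjoint (up (R 0 \ R k)) (L k) := by
  rw [Set.disjoint_left]
  rintro w ⟨v, ⟨hv0, hvk⟩, hvw⟩ hwk
  obtain ⟨j, hjk, hvj, hvj'⟩ := exists_lt_and_not_succ_of_zero (p := (v ∈ R ·)) hv0 hvk
  rw [hR j] at hvj'
  exact hvj' ⟨hvj, w, antitone_of_succ_eq_sep hL hjk hwk, hvw⟩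

theorem disjoint_up_diff_left_right
    (hL : ∀ k, L (k + 1) = {w ∈ L k | ∃ u ∈ R k, w.Sublist u}) (hRanti : Antitone R) (k : ℕ) :
    Disjoint (up (L 0 \ L (k + 1))) (R k) := by
  rw [Set.disjoint_left]
  rintro w ⟨v, ⟨hv0, hvk⟩, hvw⟩ hwk
  obtain ⟨j, hjk, hvj, hvj'⟩ := exists_lt_and_not_succ_of_zero (p := (v ∈ L ·)) hv0 hvk
  rw [hL j] at hvj'
  exact hvj' ⟨hvj, w, hRanti (Nat.lt_succ_iff.mp hjk) hwk, hvw⟩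

end Refinement

theorem separator_separates_general {α : Type*}
    (L R : ℕ → Set (List α)) (B : ℕ)
    (hL : ∀ k, L (k + 1) = {w ∈ L k | ∃ u ∈ R k, w.Sublist u})
    (hR : ∀ k, R (k + 1) = {w ∈ R k | ∃ u ∈ L (k + 1), w.Sublist u})
    (hRB : R B = ∅) :
    L 0 ∩ (⋃ k ∈ Finset.Icc 1 B, up (R 0 \ R k) \ up (L 0 \ L k)) = ∅ ∧
      R 0 ⊆ ⋃ k ∈ Finset.Icc 1 B, up (R 0 \ R k) \ up (L 0 \ L k) := by
  constructor
  · rw [Set.eq_empty_iff_forall_notMem]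
    rintro w ⟨hw0, hwS⟩
    simp only [Set.mem_iUnion] at hwS
    obtain ⟨k, -, hwR, hwL⟩ := hwS
    exact (disjoint_up_diff_right_left hL hR k).notMem_of_mem_left hwR
      (mem_of_notMem_up_diff hw0 hwL)
  · intro w hw0
    have hwB : w ∉ R B := by simp [hRB]
    obtain ⟨j, hjB, hwj, hwj'⟩ := exists_lt_and_not_succ_of_zero (p := (w ∈ R ·)) hw0 hwB
    simp only [Set.mem_iUnion, Finset.mem_Icc]
    refine ⟨j + 1, ⟨j.succ_pos, hjB⟩, subset_up ⟨hw0, hwj'⟩, fun hwL => ?_⟩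
    exact (disjoint_up_diff_left_right hL (antitone_of_succ_eq_sep hR) j).notMem_of_mem_left
      hwL hwj

theorem separator_separates {α : Type*}
    (L R : ℕ → Set (List α)) (B : ℕ)
    (hL : ∀ k, L (k + 1) = {w ∈ L k | ∃ u ∈ R k, w.Sublist u})
    (hR : ∀ k, R (k + 1) = {w ∈ R k | ∃ u ∈ L (k + 1), w.Sublist u})
    (htower : ¬ ∃ t : ℕ → List α, InfSubTower (L 0) (R 0) t)
    (hLB : L B = ∅) (hRB : R B = ∅) :
    L 0 ∩ (⋃ k ∈ Finset.Icc 1 B, up (R 0 \ R k) \ up (L 0 \ L k)) = ∅ ∧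
      R 0 ⊆ ⋃ k ∈ Finset.Icc 1 B, up (R 0 \ R k) \ up (L 0 \ L k) :=
  separator_separates_general L R B hL hR hRB
end

section
/- For every even positive integer n, the languages K = L((b* a)^{n-2} (bb)*) restricted appropriately and L accepted by the n-state DFA cycling on b with accepting states at even positions admit a finite alternating subsequence tower of height n² − n + 1 and admit no infinite alternating tower. Concretely: let K be the language accepted by the NFA A_0 with states 1,…,n, a-transitions i → i+1 for 1 ≤ i ≤ n−2, b-self-loops on states 1,…,n−2, a b-cycle between n−1 and n, all of 1,…,n−1 initial, and n−1 the unique accepting state; let L be the language of the DFA A_1 with states 1,…,n, b-transitions i → i+1 for 1 ≤ i ≤ n−1, an a-transition n → 1, initial state 1, accepting states the even states. Then the prefixes of (b^{n-1} a)^{n-2} b^n ending with an even number of b's lie in K, the prefixes ending with an odd number of b's lie in L, giving a tower of height n² − n + 1, and no infinite alternating tower between K and L exists. -/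
/-- A finite alternating subsequence tower of height `r` between `K` and `L`,
given by the first `r` values of `w`. -/
def SubTower {α : Type*} (K L : Set (List α)) (r : ℕ) (w : ℕ → List α) : Prop :=
  (0 < r → w 0 ∈ K ∪ L) ∧
    ∀ i, i + 1 < r →
      (w i).Sublist (w (i + 1)) ∧
        (w i ∈ K → w (i + 1) ∈ L) ∧ (w i ∈ L → w (i + 1) ∈ K)

/-- The letter `a` is `false`, the letter `b` is `true`.
The NFA `A₀`: states `1,…,n` are represented by `Fin n` (state `s` is index `s-1`);
`a`-transitions `i → i+1` for `1 ≤ i ≤ n-2`, `b`-self-loops on states `1,…,n-2`,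
a `b`-cycle between `n-1` and `n`; states `1,…,n-1` initial, `n-1` accepting. -/
def towerA0 (n : ℕ) : NFA Bool (Fin n) where
  step i c :=
    if c = false then
      {j | (j : ℕ) = (i : ℕ) + 1 ∧ (i : ℕ) + 3 ≤ n}
    else
      {j | ((i : ℕ) + 3 ≤ n ∧ j = i) ∨
        ((i : ℕ) + 2 = n ∧ (j : ℕ) + 1 = n) ∨ ((i : ℕ) + 1 = n ∧ (j : ℕ) + 2 = n)}
  start := {i | (i : ℕ) + 2 ≤ n}
  accept := {i | (i : ℕ) + 2 = n}

/-- The (partial deterministic) automaton `A₁`: `b`-transitions `i → i+1` for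
`1 ≤ i ≤ n-1`, an `a`-transition from `n` to `1`; state `1` initial,
even states accepting (state `s` is index `s-1`). -/
def towerA1 (n : ℕ) : NFA Bool (Fin n) where
  step i c :=
    if c = true then {j | (j : ℕ) = (i : ℕ) + 1}
    else {j | (i : ℕ) + 1 = n ∧ (j : ℕ) = 0}
  start := {i | (i : ℕ) = 0}
  accept := {i | Odd (i : ℕ)}

/-! The tower consists of the prefixes of `w = (b^(n-1) a)^(n-2) b^n`. A prefix
`(b^(n-1) a)^j b^k` is accepted by `A₀` when `k` is even (climb one state per block, then use the
`b`-cycle) and by `A₁` when `k` is odd. As `n` is even, the parity of `k` is that of the prefix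
length, so consecutive prefixes alternate between the two languages.

Conversely, `A₀` only accepts words with an even number of trailing `b`s and at most `n - 2`
letters `a`, and `A₁` only accepts words with an odd number of trailing `b`s and of length at most
`n · #a + n - 1`. Hence `K` and `L` are disjoint, so the lengths along an infinite tower grow
without bound; but every `L`-word of the tower is a subword of the next word, which is in `K`, so
it has at most `n - 2` letters `a` and bounded length. -/

namespace List

theorem prefix_append_iff {α : Type*} {p l₁ l₂ : List α} :
    p <+: l₁ ++ l₂ ↔ p <+: l₁ ∨ ∃ q, p = l₁ ++ q ∧ q <+: l₂ := by
  constructor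
  · intro h
    rcases prefix_or_prefix_of_prefix h (prefix_append l₁ l₂) with h₁ | ⟨q, rfl⟩
    · exact Or.inl h₁
    · exact Or.inr ⟨q, rfl, (prefix_append_right_inj l₁).1 h⟩
  · rintro (h | ⟨q, rfl, hq⟩)
    · exact h.trans (prefix_append l₁ l₂)
    · exact (prefix_append_right_inj l₁).2 hq

end List

namespace NFA

variable {α σ : Type*} {M : NFA α σ}

theorem invariant_of_mem_eval {P : List α → σ → Prop} (start : ∀ s ∈ M.start, P [] s)
    (step : ∀ x a s t, P x s → t ∈ M.step s a → P (x ++ [a]) t) {x : List α} {t : σ}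
    (ht : t ∈ M.eval x) : P x t := by
  induction x using List.reverseRecOn generalizing t with
  | nil => exact start t ht
  | append_singleton x a ih =>
    obtain ⟨s, hs, hst⟩ := mem_stepSet.1 ((M.eval_append_singleton x a) ▸ ht)
    exact step x a s t (ih hs) hst

theorem mem_evalFrom_singleton_of_mem_step {s t : σ} {a : α} (h : t ∈ M.step s a) :
    t ∈ M.evalFrom {s} [a] := by
  rwa [evalFrom_singleton, stepSet_singleton]

theorem mem_evalFrom_append {S : Set σ} {x y : List α} {s t : σ} (hs : s ∈ M.evalFrom S x)
    (ht : t ∈ M.evalFrom {s} y) : t ∈ M.evalFrom S (x ++ y) := by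
  rw [evalFrom_append, mem_evalFrom_iff_exists]
  exact ⟨s, hs, ht⟩

theorem mem_accepts_of_mem_evalFrom {x : List α} {s t : σ} (hs : s ∈ M.start) (ht : t ∈ M.accept)
    (h : t ∈ M.evalFrom {s} x) : x ∈ M.accepts :=
  mem_accepts.2 ⟨t, ht, mem_evalFrom_iff_exists.2 ⟨s, hs, h⟩⟩

theorem exists_mem_evalFrom_flatten_replicate (P : ℕ → σ → Prop) (u : List α) (j : ℕ) {s : σ}
    (hs : P 0 s) (h : ∀ i < j, ∀ s, P i s → ∃ t, P (i + 1) t ∧ t ∈ M.evalFrom {s} u) :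
    ∃ t, P j t ∧ t ∈ M.evalFrom {s} (List.replicate j u).flatten := by
  induction j with
  | zero => exact ⟨s, hs, by simp⟩
  | succ j ih =>
    obtain ⟨t, ht, hst⟩ := ih fun i hi => h i (by omega)
    obtain ⟨t', ht', htt'⟩ := h j (by omega) t ht
    refine ⟨t', ht', ?_⟩
    rw [List.replicate_succ', List.flatten_append, List.flatten_singleton]
    exact mem_evalFrom_append hst htt'

theorem mem_evalFrom_flatten_replicate_of_mem {u : List α} {s : σ} (h : s ∈ M.evalFrom {s} u)
    (j : ℕ) : s ∈ M.evalFrom {s} (List.replicate j u).flatten := by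
  obtain ⟨t, rfl, ht⟩ := exists_mem_evalFrom_flatten_replicate (fun _ t => t = s) u j rfl
    fun _ _ _ h' => ⟨s, rfl, by rwa [h']⟩
  exact ht

end NFA

section Towers

variable {α : Type*} {K L : Set (List α)}

theorem subTower_take {w : List α}
    (hw : ∀ p, p <+: w → (p ∈ K ↔ Even p.length) ∧ (p ∈ L ↔ ¬ Even p.length)) :
    SubTower K L (w.length + 1) (fun i => w.take i) := by
  have hmem : ∀ i ≤ w.length, (w.take i ∈ K ↔ Even i) ∧ (w.take i ∈ L ↔ ¬ Even i) := by
    intro i hi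
    simpa [List.length_take, Nat.min_eq_left hi] using hw _ (w.take_prefix i)
  refine ⟨fun _ => Or.inl ((hmem 0 (Nat.zero_le _)).1.2 Even.zero), fun i hi => ?_⟩
  have hi' : i ≤ w.length := by omega
  refine ⟨(w.take_prefix_take_left (Nat.le_succ i)).sublist, fun hK => ?_, fun hL => ?_⟩
  · rw [(hmem (i + 1) (by omega)).2, Nat.even_add_one, not_not]
    exact (hmem i hi').1.1 hK
  · rw [(hmem (i + 1) (by omega)).1, Nat.even_add_one]
    exact (hmem i hi').2.1 hL

namespace InfSubTower

variable {t : ℕ → List α}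

theorem mem_union (ht : InfSubTower K L t) (i : ℕ) : t i ∈ K ∪ L := by
  induction i with
  | zero => exact ht.1
  | succ i ih =>
    rcases ih with h | h
    · exact Or.inr ((ht.2 i).2.1 h)
    · exact Or.inl ((ht.2 i).2.2 h)

theorem ne_succ (ht : InfSubTower K L t) (hKL : Disjoint K L) (i : ℕ) : t i ≠ t (i + 1) := by
  intro heq
  rcases ht.mem_union i with h | h
  · exact hKL.ne_of_mem (heq ▸ h) ((ht.2 i).2.1 h) rfl
  · exact hKL.ne_of_mem ((ht.2 i).2.2 h) (heq ▸ h) rfl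

theorem le_length (ht : InfSubTower K L t) (hKL : Disjoint K L) (i : ℕ) : i ≤ (t i).length := by
  induction i with
  | zero => exact Nat.zero_le _
  | succ i ih =>
    have hsub := (ht.2 i).1
    have := lt_of_le_of_ne hsub.length_le fun h => ht.ne_succ hKL i (hsub.eq_of_length h)
    omega

end InfSubTower

theorem not_exists_infSubTower (hKL : Disjoint K L) (B : ℕ)
    (hB : ∀ x ∈ L, ∀ y ∈ K, x.Sublist y → x.length ≤ B) :
    ¬ ∃ t : ℕ → List α, InfSubTower K L t := by
  rintro ⟨t, ht⟩
  have hbound : ∀ i, t i ∈ L → i ≤ B := fun i h =>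
    (ht.le_length hKL i).trans (hB _ h _ ((ht.2 i).2.2 h) (ht.2 i).1)
  rcases ht.mem_union (B + 1) with h | h
  · exact absurd (hbound _ ((ht.2 _).2.1 h)) (by omega)
  · exact absurd (hbound _ h) (by omega)

end Towers

def trailingTrues (x : List Bool) : ℕ := (x.reverse.takeWhile id).length

@[simp] theorem trailingTrues_nil : trailingTrues [] = 0 := rfl

@[simp] theorem trailingTrues_append_true (x : List Bool) :
    trailingTrues (x ++ [true]) = trailingTrues x + 1 := by
  simp [trailingTrues]

@[simp] theorem trailingTrues_append_false (x : List Bool) : trailingTrues (x ++ [false]) = 0 := by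
  simp [trailingTrues]

theorem trailingTrues_append_replicate_true (x : List Bool) (k : ℕ) :
    trailingTrues (x ++ List.replicate k true) = trailingTrues x + k := by
  induction k with
  | zero => simp
  | succ k ih => rw [List.replicate_succ', ← List.append_assoc, trailingTrues_append_true, ih]; rfl

section Soundness

variable {n : ℕ}

theorem towerA0_invariant {x : List Bool} {s : Fin n} (hs : s ∈ (towerA0 n).eval x) :
    x.count false ≤ s ∧ x.count false + 2 ≤ n ∧ ((s : ℕ) + 2 = n → Even (trailingTrues x)) ∧
      ((s : ℕ) + 1 = n → ¬ Even (trailingTrues x)) := by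
  apply NFA.invariant_of_mem_eval ?_ ?_ hs
  · intro s hs
    have : (s : ℕ) + 2 ≤ n := hs
    simp only [List.count_nil, trailingTrues_nil]
    exact ⟨Nat.zero_le _, by omega, fun _ => Even.zero, fun _ => by omega⟩
  · rintro x a s t ⟨hcount, hcount', heven, hodd⟩ hst
    cases a with
    | false =>
      simp only [towerA0, if_true, Set.mem_ofPred_eq] at hst
      simp only [List.count_append, List.count_singleton_self, trailingTrues_append_false]
      exact ⟨by omega, by omega, fun _ => Even.zero, fun _ => by omega⟩
    | true =>
      simp only [towerA0, Bool.true_eq_false, if_false, Set.mem_ofPred_eq] at hst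
      simp only [List.count_append, show [true].count false = 0 from rfl, add_zero,
        trailingTrues_append_true, Nat.even_add_one, not_not]
      rcases hst with ⟨_, rfl⟩ | ⟨hs, ht⟩ | ⟨hs, ht⟩
      · exact ⟨hcount, hcount', fun _ => by omega, fun _ => by omega⟩
      · exact ⟨by omega, hcount', fun _ => by omega, fun _ => heven hs⟩
      · exact ⟨by omega, hcount', fun _ => hodd hs, fun _ => by omega⟩

theorem towerA1_invariant {x : List Bool} {s : Fin n} (hs : s ∈ (towerA1 n).eval x) :
    (s : ℕ) = trailingTrues x ∧ x.length ≤ n * x.count false + s := by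
  apply NFA.invariant_of_mem_eval ?_ ?_ hs
  · intro s hs
    have : (s : ℕ) = 0 := hs
    simp [this]
  · rintro x a s t ⟨htrail, hlen⟩ hst
    cases a with
    | false =>
      simp only [towerA1, Bool.false_eq_true, if_false, Set.mem_ofPred_eq] at hst
      simp only [List.count_append, List.count_singleton_self, trailingTrues_append_false,
        List.length_append, List.length_singleton, Nat.mul_add]
      have := s.isLt
      exact ⟨hst.2, by omega⟩
    | true =>
      simp only [towerA1, if_true, Set.mem_ofPred_eq] at hst
      simp only [List.count_append, show [true].count false = 0 from rfl, add_zero,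
        trailingTrues_append_true, List.length_append, List.length_singleton]
      exact ⟨by omega, by omega⟩

theorem even_trailingTrues_of_mem_towerA0 {x : List Bool} (hx : x ∈ (towerA0 n).accepts) :
    Even (trailingTrues x) := by
  obtain ⟨s, hacc, hs⟩ := hx
  exact (towerA0_invariant hs).2.2.1 hacc

theorem count_false_le_of_mem_towerA0 {x : List Bool} (hx : x ∈ (towerA0 n).accepts) :
    x.count false ≤ n - 2 := by
  obtain ⟨s, -, hs⟩ := hx
  have := (towerA0_invariant hs).2.1
  omega

theorem odd_trailingTrues_of_mem_towerA1 {x : List Bool} (hx : x ∈ (towerA1 n).accepts) :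
    Odd (trailingTrues x) := by
  obtain ⟨s, hacc, hs⟩ := hx
  exact (towerA1_invariant hs).1 ▸ hacc

theorem length_le_of_mem_towerA1 {x : List Bool} (hx : x ∈ (towerA1 n).accepts) :
    x.length ≤ n * x.count false + (n - 1) := by
  obtain ⟨s, -, hs⟩ := hx
  have := (towerA1_invariant hs).2
  have := s.isLt
  omega

theorem disjoint_towerA0_towerA1 : Disjoint (towerA0 n).accepts (towerA1 n).accepts :=
  Set.disjoint_left.2 fun _ hK hL =>
    Nat.not_even_iff_odd.2 (odd_trailingTrues_of_mem_towerA1 hL)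
      (even_trailingTrues_of_mem_towerA0 hK)

theorem length_le_of_mem_towerA1_of_sublist {x y : List Bool} (hx : x ∈ (towerA1 n).accepts)
    (hy : y ∈ (towerA0 n).accepts) (hxy : x.Sublist y) :
    x.length ≤ n * (n - 2) + (n - 1) :=
  (length_le_of_mem_towerA1 hx).trans <| Nat.add_le_add_right
    (Nat.mul_le_mul_left n ((hxy.count_le false).trans (count_false_le_of_mem_towerA0 hy))) _

end Soundness

def towerBlock (n : ℕ) : List Bool := List.replicate (n - 1) true ++ [false]

def towerPrefix (n j k : ℕ) : List Bool :=
  (List.replicate j (towerBlock n)).flatten ++ List.replicate k true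

section Prefixes

variable {n : ℕ}

theorem trailingTrues_towerPrefix (j k : ℕ) : trailingTrues (towerPrefix n j k) = k := by
  rw [towerPrefix, trailingTrues_append_replicate_true]
  cases j with
  | zero => simp
  | succ j =>
    rw [List.replicate_succ', List.flatten_append, List.flatten_singleton, towerBlock,
      ← List.append_assoc, trailingTrues_append_false, zero_add]

theorem length_towerPrefix (hn : 1 ≤ n) (j k : ℕ) : (towerPrefix n j k).length = j * n + k := by
  simp [towerPrefix, towerBlock, List.length_flatten, Nat.sub_add_cancel hn]

theorem exists_eq_towerPrefix_of_prefix {m N : ℕ} (hN : N ≤ n) {p : List Bool}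
    (hp : p <+: towerPrefix n m N) : ∃ j ≤ m, ∃ k ≤ n, p = towerPrefix n j k := by
  induction m generalizing p with
  | zero =>
    obtain ⟨hlen, hrep⟩ := List.prefix_replicate_iff.1 (by simpa [towerPrefix] using hp)
    exact ⟨0, le_rfl, p.length, by omega, by simpa [towerPrefix] using hrep⟩
  | succ m ih =>
    rw [towerPrefix, List.replicate_succ, List.flatten_cons, List.append_assoc,
      List.prefix_append_iff, towerBlock] at hp
    rcases hp with hp | ⟨q, rfl, hq⟩
    · rcases List.prefix_concat_iff.1 hp with rfl | hp
      · exact ⟨1, by omega, 0, by omega, by simp [towerPrefix, towerBlock]⟩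
      · obtain ⟨hlen, hrep⟩ := List.prefix_replicate_iff.1 hp
        exact ⟨0, by omega, p.length, by omega, by simpa [towerPrefix] using hrep⟩
    · obtain ⟨j, hj, k, hk, rfl⟩ := ih hq
      exact ⟨j + 1, by omega, k, hk, by
        simp [towerPrefix, towerBlock, List.replicate_succ]⟩

end Prefixes

section Runs

variable {n : ℕ}

theorem towerA0_mem_evalFrom_towerBlock {s t : Fin n} (hs : (s : ℕ) + 3 ≤ n)
    (ht : (t : ℕ) = s + 1) : t ∈ (towerA0 n).evalFrom {s} (towerBlock n) := by
  have hloop : s ∈ (towerA0 n).evalFrom {s} [true] :=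
    NFA.mem_evalFrom_singleton_of_mem_step (by simp [towerA0, hs])
  have hbs := NFA.mem_evalFrom_flatten_replicate_of_mem hloop (n - 1)
  rw [List.flatten_replicate_singleton] at hbs
  exact NFA.mem_evalFrom_append hbs
    (NFA.mem_evalFrom_singleton_of_mem_step (by simp [towerA0, ht, hs]))

theorem towerA0_mem_evalFrom_replicate_of_even {s : Fin n} (hs : (s : ℕ) + 2 = n) {k : ℕ}
    (hk : Even k) : s ∈ (towerA0 n).evalFrom {s} (List.replicate k true) := by
  obtain ⟨m, rfl⟩ := hk
  let t : Fin n := ⟨n - 1, by omega⟩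
  have hcycle : s ∈ (towerA0 n).evalFrom {s} (List.replicate 2 true) :=
    NFA.mem_evalFrom_append (s := t)
      (NFA.mem_evalFrom_singleton_of_mem_step (by simp [towerA0, t]; omega))
      (NFA.mem_evalFrom_singleton_of_mem_step (by simp [towerA0, t]; omega))
  rw [← Nat.mul_two, ← List.flatten_replicate_replicate]
  exact NFA.mem_evalFrom_flatten_replicate_of_mem hcycle m

theorem towerPrefix_mem_towerA0 {j k : ℕ} (hj : j + 2 ≤ n) (hk : Even k) :
    towerPrefix n j k ∈ (towerA0 n).accepts := by
  let s₀ : Fin n := ⟨n - 2 - j, by omega⟩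
  obtain ⟨t, ht, hblocks⟩ := NFA.exists_mem_evalFrom_flatten_replicate (M := towerA0 n)
    (fun i (s : Fin n) => (s : ℕ) = n - 2 - j + i) (towerBlock n) j (s := s₀) rfl
    fun i _ s hs => ⟨⟨s + 1, by omega⟩, by simp only; omega,
      towerA0_mem_evalFrom_towerBlock (by omega) rfl⟩
  have ht' : (t : ℕ) + 2 = n := by omega
  exact NFA.mem_accepts_of_mem_evalFrom (s := s₀) (show _ + 2 ≤ n by simp only [s₀]; omega) ht'
    (NFA.mem_evalFrom_append hblocks (towerA0_mem_evalFrom_replicate_of_even ht' hk))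

theorem towerA1_exists_mem_evalFrom_replicate {s : Fin n} {k : ℕ} (hk : (s : ℕ) + k < n) :
    ∃ t : Fin n, (t : ℕ) = s + k ∧ t ∈ (towerA1 n).evalFrom {s} (List.replicate k true) := by
  simpa using NFA.exists_mem_evalFrom_flatten_replicate (M := towerA1 n)
    (fun i (t : Fin n) => (t : ℕ) = s + i) [true] k rfl
    fun i _ t ht => ⟨⟨t + 1, by omega⟩, by simp only; omega,
      NFA.mem_evalFrom_singleton_of_mem_step (by simp [towerA1])⟩

theorem towerA1_mem_evalFrom_towerBlock {s t : Fin n} (hs : (s : ℕ) = 0) (ht : (t : ℕ) = 0) :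
    t ∈ (towerA1 n).evalFrom {s} (towerBlock n) := by
  obtain ⟨u, hu, hbs⟩ := towerA1_exists_mem_evalFrom_replicate (s := s) (k := n - 1) (by omega)
  exact NFA.mem_evalFrom_append hbs
    (NFA.mem_evalFrom_singleton_of_mem_step (by simp [towerA1, ht]; omega))

theorem towerPrefix_mem_towerA1 {j k : ℕ} (hk : k < n) (hodd : Odd k) :
    towerPrefix n j k ∈ (towerA1 n).accepts := by
  let z : Fin n := ⟨0, by omega⟩
  obtain ⟨t, ht, hblocks⟩ := NFA.exists_mem_evalFrom_flatten_replicate (M := towerA1 n)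
    (fun _ (t : Fin n) => (t : ℕ) = 0) (towerBlock n) j (s := z) rfl
    fun _ _ _ hs => ⟨z, rfl, towerA1_mem_evalFrom_towerBlock hs rfl⟩
  obtain ⟨u, hu, hbs⟩ := towerA1_exists_mem_evalFrom_replicate (s := t) (k := k) (by omega)
  exact NFA.mem_accepts_of_mem_evalFrom (s := z) rfl
    (show Odd (u : ℕ) by rwa [hu, ht, zero_add]) (NFA.mem_evalFrom_append hblocks hbs)

end Runs

section TowerWord

variable {n : ℕ} {p : List Bool}

theorem mem_towerA0_of_prefix (hn : 2 ≤ n) (hp : p <+: towerPrefix n (n - 2) n)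
    (h : Even (trailingTrues p)) : p ∈ (towerA0 n).accepts := by
  obtain ⟨j, hj, k, -, rfl⟩ := exists_eq_towerPrefix_of_prefix le_rfl hp
  rw [trailingTrues_towerPrefix] at h
  exact towerPrefix_mem_towerA0 (by omega) h

theorem mem_towerA1_of_prefix (heven : Even n) (hp : p <+: towerPrefix n (n - 2) n)
    (h : ¬ Even (trailingTrues p)) : p ∈ (towerA1 n).accepts := by
  obtain ⟨j, -, k, hk, rfl⟩ := exists_eq_towerPrefix_of_prefix le_rfl hp
  rw [trailingTrues_towerPrefix] at h
  exact towerPrefix_mem_towerA1 (hk.lt_of_ne (by rintro rfl; exact h heven))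
    (Nat.not_even_iff_odd.1 h)

theorem even_trailingTrues_iff_of_prefix (hpos : 0 < n) (heven : Even n)
    (hp : p <+: towerPrefix n (n - 2) n) : Even (trailingTrues p) ↔ Even p.length := by
  obtain ⟨j, -, k, -, rfl⟩ := exists_eq_towerPrefix_of_prefix le_rfl hp
  rw [trailingTrues_towerPrefix, length_towerPrefix hpos, Nat.even_add]
  exact ⟨fun hk => iff_of_true (heven.mul_left j) hk, fun h => h.1 (heven.mul_left j)⟩

theorem length_towerPrefix_sub_two (hn : 2 ≤ n) : (towerPrefix n (n - 2) n).length = n ^ 2 - n := by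
  rw [length_towerPrefix (by omega)]
  obtain ⟨m, rfl⟩ : ∃ m, n = m + 2 := ⟨n - 2, by omega⟩
  have : (m + 2) ^ 2 = m * (m + 2) + (m + 2) + (m + 2) := by ring
  rw [Nat.add_sub_cancel]
  omega

end TowerWord

theorem quadratic_tower (n : ℕ) (hpos : 0 < n) (heven : Even n) :
    let K : Set (List Bool) := (towerA0 n).accepts
    let L : Set (List Bool) := (towerA1 n).accepts
    let w : List Bool :=
      (List.replicate (n - 2) (List.replicate (n - 1) true ++ [false])).flatten ++
        List.replicate n true
    (∀ p, p <+: w → Even (p.reverse.takeWhile id).length → p ∈ K) ∧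
    (∀ p, p <+: w → ¬ Even (p.reverse.takeWhile id).length → p ∈ L) ∧
    (∃ t : ℕ → List Bool, SubTower K L (n ^ 2 - n + 1) t) ∧
    ¬ ∃ t : ℕ → List Bool, InfSubTower K L t := by
  intro K L w
  have hn : 2 ≤ n := by
    obtain ⟨m, rfl⟩ := heven
    omega
  have hK : ∀ p, p <+: w → Even (trailingTrues p) → p ∈ K := fun _ => mem_towerA0_of_prefix hn
  have hL : ∀ p, p <+: w → ¬ Even (trailingTrues p) → p ∈ L := fun _ => mem_towerA1_of_prefix heven
  have htower : SubTower K L (w.length + 1) (fun i => w.take i) := subTower_take fun p hp => by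
    rw [← even_trailingTrues_iff_of_prefix hpos heven hp]
    exact ⟨⟨even_trailingTrues_of_mem_towerA0, hK p hp⟩,
      ⟨fun h => Nat.not_even_iff_odd.2 (odd_trailingTrues_of_mem_towerA1 h), hL p hp⟩⟩
  have hlen : w.length = n ^ 2 - n := length_towerPrefix_sub_two hn
  exact ⟨hK, hL, ⟨_, hlen ▸ htower⟩, not_exists_infSubTower disjoint_towerA0_towerA1 _
    fun _ hx _ hy => length_le_of_mem_towerA1_of_sublist hx hy⟩
end

section
/- For every m ≥ 0, define strings u_k over Σ_m = {b, a_1, …, a_m} by u_0 = ε and u_k = u_{k-1} b a_k u_{k-1}. Then |u_m b| = 2^{m+1} − 1, every odd-length prefix of u_m b ends with the letter b, and every even-length prefix of u_m b is accepted by the NFA A_m whose states are {0,1,…,m} (all initial, 0 accepting) with b-self-loops on states 1,…,m, a_j-self-loops on states i > j, and a_i-transitions from state i to every state j < i. Consequently the prefixes of u_m b form an alternating tower of height 2^{m+1} between L(A_m) and Σ_m* b. -/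
/-- The alphabet `Σ_m = {b, a_1, …, a_m}` is encoded in `ℕ`: the letter `b` is `0`
and the letter `a_i` is `i` (for `1 ≤ i ≤ m`).  The NFA `A_m` has states
`{0,1,…,m}` (all initial, `0` accepting), `b`-self-loops on states `1,…,m`,
`a_j`-self-loops on states `i > j`, and `a_i`-transitions from `i` to all `j < i`. -/
def expNFA (m : ℕ) : NFA ℕ (Fin (m + 1)) where
  step i c :=
    {j | (c = 0 ∧ 1 ≤ (i : ℕ) ∧ j = i) ∨
      (1 ≤ c ∧ c < (i : ℕ) ∧ j = i) ∨
      (c = (i : ℕ) ∧ 1 ≤ (i : ℕ) ∧ (j : ℕ) < (i : ℕ))}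
  start := Set.univ
  accept := {i | (i : ℕ) = 0}

/-- The strings `u_k`: `u_0 = ε` and `u_k = u_{k-1} b a_k u_{k-1}`. -/
def uWord : ℕ → List ℕ
  | 0 => []
  | k + 1 => uWord k ++ 0 :: (k + 1) :: uWord k

/-- The language `Σ_m* b`. -/
def endsWithB (m : ℕ) : Set (List ℕ) :=
  {w | (∀ c ∈ w, c ≤ m) ∧ ∃ v, w = v ++ [0]}

/-! The state `k + 1` of `A_m` loops on every letter of `u_k b`, and its `a_{k+1}`-transition
reaches any state `s ≤ k`; so reading `u_{k+1} = u_k b a_{k+1} u_k` from `k + 1`, one can jump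
to whichever state `s ≤ k` reads the rest of an even prefix of `u_k` into `0`. Dually, odd
prefixes of `u_m b` end in `b`, and no `b`-transition enters the accepting state `0`, so the two
languages are disjoint and the prefixes of `u_m b` alternate between them. -/

theorem List.IsPrefix.eq_append_or_isPrefix {α : Type*} {p x y : List α} (h : p <+: x ++ y) :
    p <+: x ∨ ∃ q, p = x ++ q ∧ q <+: y := by
  rcases le_total p.length x.length with hle | hle
  · exact .inl ((List.isPrefix_append_of_length hle).mp h)
  · obtain ⟨q, rfl⟩ := List.prefix_of_prefix_length_le (List.prefix_append x y) h hle
    exact .inr ⟨q, rfl, (List.prefix_append_right_inj x).mp h⟩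

theorem subTower_of_even_odd {α : Type*} {K L : Set (List α)} {r : ℕ} {w : ℕ → List α}
    (hKL : Disjoint K L) (hw : ∀ i, i + 1 < r → (w i).Sublist (w (i + 1)))
    (hK : ∀ i < r, Even i → w i ∈ K) (hL : ∀ i < r, Odd i → w i ∈ L) :
    SubTower K L r w := by
  refine ⟨fun hr => .inl (hK 0 hr ⟨0, rfl⟩), fun i hi => ⟨hw i hi, ?_⟩⟩
  rcases Nat.even_or_odd i with hi' | hi'
  · exact ⟨fun _ => hL (i + 1) hi hi'.add_one,
      fun hiL => absurd hiL (hKL.notMem_of_mem_left (hK i (by omega) hi'))⟩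
  · exact ⟨fun hiK => absurd (hL i (by omega) hi') (hKL.notMem_of_mem_left hiK),
      fun _ => hK (i + 1) hi hi'.add_one⟩

namespace NFA

variable {α σ : Type*} (M : NFA α σ) {s t u : σ} {a : α} {x y : List α}

theorem mem_evalFrom_singleton_cons (h : t ∈ M.step s a) (hx : u ∈ M.evalFrom {t} x) :
    u ∈ M.evalFrom {s} (a :: x) := by
  rw [evalFrom_cons, stepSet_singleton, mem_evalFrom_iff_exists]
  exact ⟨t, h, hx⟩

theorem mem_evalFrom_singleton_append (hx : t ∈ M.evalFrom {s} x)
    (hy : u ∈ M.evalFrom {t} y) : u ∈ M.evalFrom {s} (x ++ y) := by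
  rw [evalFrom_append, mem_evalFrom_iff_exists]
  exact ⟨t, hx, hy⟩

theorem mem_evalFrom_singleton_self (h : ∀ a ∈ x, s ∈ M.step s a) : s ∈ M.evalFrom {s} x := by
  induction x with
  | nil => simp
  | cons a x ih =>
    exact M.mem_evalFrom_singleton_cons (h a (by simp)) (ih fun b hb => h b (by simp [hb]))

end NFA

theorem length_uWord_add_two (k : ℕ) : (uWord k).length + 2 = 2 ^ (k + 1) := by
  induction k with
  | zero => simp [uWord]
  | succ k ih =>
    simp only [uWord, List.length_append, List.length_cons, pow_succ] at ih ⊢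
    omega

theorem even_length_uWord (k : ℕ) : Even (uWord k).length := by
  induction k with
  | zero => simp [uWord]
  | succ k ih => simp [uWord, Nat.even_add, ih]

theorem le_of_mem_uWord {k c : ℕ} (hc : c ∈ uWord k) : c ≤ k := by
  induction k with
  | zero => simp [uWord] at hc
  | succ k ih =>
    simp only [uWord, List.mem_append, List.mem_cons] at hc
    rcases hc with hc | rfl | rfl | hc <;> grind

theorem le_of_mem_uWord_append_zero {k c : ℕ} (hc : c ∈ uWord k ++ [0]) : c ≤ k := by
  rcases List.mem_append.mp hc with hc | hc
  · exact le_of_mem_uWord hc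
  · simp [List.mem_singleton.mp hc]

theorem uWord_succ_append_zero (k : ℕ) :
    uWord (k + 1) ++ [0] = (uWord k ++ [0]) ++ (k + 1) :: (uWord k ++ [0]) := by
  simp [uWord]

theorem exists_eq_append_zero_of_prefix_uWord {k : ℕ} {p : List ℕ}
    (hp : p <+: uWord k ++ [0]) (hodd : Odd p.length) : ∃ v, p = v ++ [0] := by
  induction k generalizing p with
  | zero =>
    rcases List.prefix_concat_iff.mp hp with rfl | hp
    · exact ⟨[], rfl⟩
    · simp [List.prefix_nil.mp hp] at hodd
  | succ k ih =>
    rw [uWord_succ_append_zero] at hp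
    rcases hp.eq_append_or_isPrefix with hp | ⟨q, rfl, hq⟩
    · exact ih hp hodd
    rcases List.prefix_cons_iff.mp hq with rfl | ⟨t, rfl, ht⟩
    · exact ⟨uWord k, by simp⟩
    · have htodd : Odd t.length := by
        obtain ⟨j, hj⟩ := even_length_uWord k
        simp only [List.length_append, List.length_cons, List.length_nil] at hodd
        rw [Nat.odd_iff] at hodd ⊢
        omega
      obtain ⟨v, rfl⟩ := ih ht htodd
      exact ⟨uWord k ++ 0 :: (k + 1) :: v, by simp⟩

theorem expNFA_self_mem_step {m k c : ℕ} (hk : k < m + 1) (hc : c < k) :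
    (⟨k, hk⟩ : Fin (m + 1)) ∈ (expNFA m).step ⟨k, hk⟩ c := by
  rcases Nat.eq_zero_or_pos c with rfl | hc₀
  · exact .inl ⟨rfl, hc, rfl⟩
  · exact .inr (.inl ⟨hc₀, hc, rfl⟩)

theorem exists_zero_mem_evalFrom_of_prefix_uWord {m k : ℕ} (hk : k ≤ m) {p : List ℕ}
    (hp : p <+: uWord k) (heven : Even p.length) :
    ∃ s : Fin (m + 1), (s : ℕ) ≤ k ∧ 0 ∈ (expNFA m).evalFrom {s} p := by
  induction k generalizing p with
  | zero =>
    rw [show uWord 0 = [] from rfl, List.prefix_nil] at hp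
    exact ⟨0, le_rfl, by simp [hp]⟩
  | succ k ih =>
    rcases hp.eq_append_or_isPrefix with hp | ⟨q, rfl, hq⟩
    · obtain ⟨s, hs, hrun⟩ := ih (by omega) hp heven
      exact ⟨s, by omega, hrun⟩
    rcases List.prefix_cons_iff.mp hq with rfl | ⟨t, rfl, ht⟩
    · obtain ⟨s, hs, hrun⟩ := ih (by omega) (List.prefix_refl _) (by simpa using heven)
      exact ⟨s, by omega, by simpa using hrun⟩
    rcases List.prefix_cons_iff.mp ht with rfl | ⟨r, rfl, hr⟩
    · simp [Nat.even_add_one, even_length_uWord] at heven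
    have hreven : Even r.length := by
      simpa [Nat.even_add, even_length_uWord, Nat.even_add_one] using heven
    obtain ⟨s, hs, hrun⟩ := ih (by omega) hr hreven
    refine ⟨⟨k + 1, by omega⟩, le_rfl, ?_⟩
    rw [show uWord k ++ 0 :: (k + 1) :: r = (uWord k ++ [0]) ++ (k + 1) :: r by simp]
    exact (expNFA m).mem_evalFrom_singleton_append
      ((expNFA m).mem_evalFrom_singleton_self fun c hc =>
        expNFA_self_mem_step _ (Nat.lt_succ_of_le (le_of_mem_uWord_append_zero hc)))
      ((expNFA m).mem_evalFrom_singleton_cons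
        (.inr (.inr ⟨rfl, Nat.le_add_left 1 k, Nat.lt_succ_of_le hs⟩)) hrun)

theorem mem_accepts_of_prefix_uWord {m : ℕ} {p : List ℕ} (hp : p <+: uWord m ++ [0])
    (heven : Even p.length) : p ∈ (expNFA m).accepts := by
  have hp : p <+: uWord m := by
    rcases List.prefix_concat_iff.mp hp with rfl | hp
    · simp [Nat.even_add_one, even_length_uWord] at heven
    · exact hp
  obtain ⟨s, -, hrun⟩ := exists_zero_mem_evalFrom_of_prefix_uWord le_rfl hp heven
  exact NFA.mem_accepts.mpr ⟨0, rfl, (NFA.mem_evalFrom_iff_exists).mpr ⟨s, trivial, hrun⟩⟩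

theorem append_zero_notMem_accepts (m : ℕ) (v : List ℕ) : v ++ [0] ∉ (expNFA m).accepts := by
  rw [NFA.mem_accepts]
  rintro ⟨s, hs, hrun⟩
  rw [NFA.evalFrom_append, NFA.evalFrom_singleton, NFA.mem_stepSet] at hrun
  obtain ⟨t, -, ht⟩ := hrun
  change (s : ℕ) = 0 at hs
  rcases ht with ⟨-, ht, rfl⟩ | ⟨h, -⟩ | ⟨h, ht, -⟩ <;> omega

theorem disjoint_accepts_endsWithB (m : ℕ) :
    Disjoint ((expNFA m).accepts : Set (List ℕ)) (endsWithB m) :=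
  Set.disjoint_left.mpr fun _ hw ⟨_, v, hv⟩ => append_zero_notMem_accepts m v (hv ▸ hw)

theorem exp_tower (m : ℕ) :
    (uWord m ++ [0]).length = 2 ^ (m + 1) - 1 ∧
    (∀ p, p <+: uWord m ++ [0] → Odd p.length → ∃ v, p = v ++ [0]) ∧
    (∀ p, p <+: uWord m ++ [0] → Even p.length → p ∈ (expNFA m).accepts) ∧
    SubTower ((expNFA m).accepts : Set (List ℕ)) (endsWithB m) (2 ^ (m + 1))
      (fun i => (uWord m ++ [0]).take i) := by
  have hlen : (uWord m ++ [0]).length + 1 = 2 ^ (m + 1) := by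
    simp [← length_uWord_add_two]
  have length_take {i} (hi : i < 2 ^ (m + 1)) : ((uWord m ++ [0]).take i).length = i := by
    simp only [List.length_take]
    omega
  refine ⟨by omega, fun _ => exists_eq_append_zero_of_prefix_uWord,
    fun _ => mem_accepts_of_prefix_uWord, ?_⟩
  refine subTower_of_even_odd (disjoint_accepts_endsWithB m)
    (fun i _ => List.take_sublist_take_left (Nat.le_succ i)) ?_ ?_
  · intro i hi heven
    exact mem_accepts_of_prefix_uWord (List.take_prefix i _) (by rwa [length_take hi])
  · intro i hi hodd
    exact ⟨fun c hc => le_of_mem_uWord_append_zero (List.mem_of_mem_take hc),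
      exists_eq_append_zero_of_prefix_uWord (List.take_prefix i _) (by rwa [length_take hi])⟩
end

section
/- Let K and L be regular languages (given by DFAs with m and n states respectively, say). If there exist towers of prefixes of arbitrary height between K and L, then there exists an infinite tower of prefixes between K and L. Moreover, any finite tower of prefixes has height at most the number of states of the product automaton of the minimal DFAs. -/
/-- A finite tower of prefixes of height `r` between `K` and `L`. -/
def PrefTower {α : Type*} (K L : Set (List α)) (r : ℕ) (w : ℕ → List α) : Prop :=
  (0 < r → w 0 ∈ K ∪ L) ∧
    ∀ i, i + 1 < r →
      w i <+: w (i + 1) ∧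
        (w i ∈ K → w (i + 1) ∈ L) ∧ (w i ∈ L → w (i + 1) ∈ K)

/-- An infinite tower of prefixes between `K` and `L`. -/
def InfPrefTower {α : Type*} (K L : Set (List α)) (w : ℕ → List α) : Prop :=
  w 0 ∈ K ∪ L ∧
    ∀ i, w i <+: w (i + 1) ∧
      (w i ∈ K → w (i + 1) ∈ L) ∧ (w i ∈ L → w (i + 1) ∈ K)

/-- The set of left quotients of a language; its cardinality is the number of
states of the minimal DFA of the language. -/
def leftQuotients {α : Type*} (K : Set (List α)) : Set (Set (List α)) :=
  {S | ∃ x : List α, S = {y | x ++ y ∈ K}}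

/-!
Record, along a tower `w`, the pair of left quotients of `w i` with respect to `K` and `L`: it
decides membership of `w i` in `K` and `L`, and it determines the pair of every extension of
`w i`. A regular language has finitely many left quotients, so a tower longer than the number of
such pairs repeats a pair at two levels `i < j`. From then on the steps from level `i` to level
`j` can be repeated forever, and the resulting words keep alternating between `K` and `L`.
-/

section

variable {α : Type*}

lemma finite_leftQuotients_accepts {σ : Type*} [Fintype σ] (A : DFA α σ) :
    (leftQuotients A.accepts).Finite := by
  refine (Set.finite_range A.acceptsFrom).subset ?_
  rintro _ ⟨x, rfl⟩
  exact ⟨A.eval x, (Language.leftQuotient_accepts_apply A x).symm⟩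

/-- The state reached by `x` in the product of the minimal automata of `K` and `L`. -/
def leftQuotientPair (K L : Set (List α)) (x : List α) : Set (List α) × Set (List α) :=
  ({y | x ++ y ∈ K}, {y | x ++ y ∈ L})

section leftQuotientPair

variable {K L : Set (List α)} {x y : List α}

lemma leftQuotientPair_mem_prod (x : List α) :
    leftQuotientPair K L x ∈ leftQuotients K ×ˢ leftQuotients L :=
  ⟨⟨x, rfl⟩, ⟨x, rfl⟩⟩

lemma leftQuotientPair_append_congr (h : leftQuotientPair K L x = leftQuotientPair K L y)
    (z : List α) : leftQuotientPair K L (x ++ z) = leftQuotientPair K L (y ++ z) := by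
  simp only [leftQuotientPair, Prod.ext_iff, Set.ext_iff, Set.mem_ofPred_eq] at h ⊢
  simp only [List.append_assoc]
  exact ⟨fun s => h.1 (z ++ s), fun s => h.2 (z ++ s)⟩

lemma mem_left_iff_of_leftQuotientPair_eq
    (h : leftQuotientPair K L x = leftQuotientPair K L y) : x ∈ K ↔ y ∈ K := by
  simpa [leftQuotientPair] using congrArg (List.nil ∈ ·.1) h

lemma mem_right_iff_of_leftQuotientPair_eq
    (h : leftQuotientPair K L x = leftQuotientPair K L y) : x ∈ L ↔ y ∈ L := by
  simpa [leftQuotientPair] using congrArg (List.nil ∈ ·.2) h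

end leftQuotientPair

namespace PrefTower

variable {K L : Set (List α)} {r : ℕ} {w : ℕ → List α}

lemma append_drop (hw : PrefTower K L r w) {k : ℕ} (hk : k + 1 < r) :
    w k ++ (w (k + 1)).drop (w k).length = w (k + 1) :=
  List.prefix_iff_eq_append.mp (hw.2 k hk).1

/-- Counts `0, 1, …, j - 1` and then cycles through `i, …, j - 1` forever. -/
def loopIndex (i j : ℕ) : ℕ → ℕ
  | 0 => 0
  | t + 1 => if loopIndex i j t + 1 = j then i else loopIndex i j t + 1

lemma loopIndex_lt {i j : ℕ} (hij : i < j) : ∀ t, loopIndex i j t < j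
  | 0 => by simp only [loopIndex]; omega
  | t + 1 => by
    have := loopIndex_lt hij t
    simp only [loopIndex]
    split_ifs <;> omega

/-- Glues onto `w 0` the increments from `w k` to `w (k + 1)`, in the order `loopIndex i j`. -/
def pump (w : ℕ → List α) (i j : ℕ) : ℕ → List α
  | 0 => w 0
  | t + 1 => pump w i j t ++ (w (loopIndex i j t + 1)).drop (w (loopIndex i j t)).length

variable {i j : ℕ}

lemma leftQuotientPair_pump_succ (hw : PrefTower K L r w) (hij : i < j) (hjr : j < r) {t : ℕ}
    (ht : leftQuotientPair K L (pump w i j t) = leftQuotientPair K L (w (loopIndex i j t))) :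
    leftQuotientPair K L (pump w i j (t + 1)) =
      leftQuotientPair K L (w (loopIndex i j t + 1)) := by
  rw [pump, leftQuotientPair_append_congr ht,
    hw.append_drop (by have := loopIndex_lt hij t; omega)]

lemma leftQuotientPair_pump (hw : PrefTower K L r w) (hij : i < j) (hjr : j < r)
    (hq : leftQuotientPair K L (w i) = leftQuotientPair K L (w j)) (t : ℕ) :
    leftQuotientPair K L (pump w i j t) = leftQuotientPair K L (w (loopIndex i j t)) := by
  induction t with
  | zero => rfl
  | succ t ih =>
    rw [leftQuotientPair_pump_succ hw hij hjr ih, loopIndex]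
    split_ifs with hj
    · rw [hj, hq]
    · rfl

lemma infPrefTower_pump (hw : PrefTower K L r w) (hij : i < j) (hjr : j < r)
    (hq : leftQuotientPair K L (w i) = leftQuotientPair K L (w j)) :
    InfPrefTower K L (pump w i j) := by
  refine ⟨hw.1 (by omega), fun t => ⟨⟨_, rfl⟩, ?_⟩⟩
  have hcur := leftQuotientPair_pump hw hij hjr hq t
  have hnext := leftQuotientPair_pump_succ hw hij hjr hcur
  have hstep := (hw.2 (loopIndex i j t) (by have := loopIndex_lt hij t; omega)).2
  rw [mem_left_iff_of_leftQuotientPair_eq hcur, mem_right_iff_of_leftQuotientPair_eq hcur,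
    mem_left_iff_of_leftQuotientPair_eq hnext, mem_right_iff_of_leftQuotientPair_eq hnext]
  exact hstep

theorem exists_infPrefTower (hw : PrefTower K L r w) (hK : (leftQuotients K).Finite)
    (hL : (leftQuotients L).Finite)
    (hr : (leftQuotients K).ncard * (leftQuotients L).ncard < r) :
    ∃ v, InfPrefTower K L v := by
  obtain ⟨a, ha, b, hb, hab, hq⟩ := Set.exists_ne_map_eq_of_ncard_lt_of_maps_to
    (s := Set.Iio r) (f := fun k => leftQuotientPair K L (w k))
    (by rwa [Set.ncard_prod, Set.ncard_Iio_nat])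
    (fun k _ => leftQuotientPair_mem_prod (w k)) (hK.prod hL)
  rcases hab.lt_or_gt with h | h
  · exact ⟨_, hw.infPrefTower_pump h hb hq⟩
  · exact ⟨_, hw.infPrefTower_pump h ha hq.symm⟩

end PrefTower

end

theorem pref_towers_arbitrary_height_infinite {α σA σB : Type*}
    [Fintype σA] [Fintype σB] (A : DFA α σA) (B : DFA α σB)
    (K L : Set (List α)) (hK : K = A.accepts) (hL : L = B.accepts) :
    ((∀ r : ℕ, ∃ w : ℕ → List α, PrefTower K L r w) →
      ∃ w : ℕ → List α, InfPrefTower K L w) ∧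
    ((¬ ∃ w : ℕ → List α, InfPrefTower K L w) →
      ∀ (r : ℕ) (w : ℕ → List α), PrefTower K L r w →
        r ≤ (leftQuotients K).ncard * (leftQuotients L).ncard) := by
  have hKfin : (leftQuotients K).Finite := hK ▸ finite_leftQuotients_accepts A
  have hLfin : (leftQuotients L).Finite := hL ▸ finite_leftQuotients_accepts B
  refine ⟨fun htowers => ?_, fun hno r w hw => ?_⟩
  · obtain ⟨w, hw⟩ := htowers ((leftQuotients K).ncard * (leftQuotients L).ncard + 1)
    exact hw.exists_infPrefTower hKfin hLfin (Nat.lt_succ_self _)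
  · by_contra! hr
    exact hno (hw.exists_infPrefTower hKfin hLfin hr)
end

section
/- There exist languages K (regular) and L (non-regular context-free) such that there are finite towers of prefixes of arbitrary height between K and L, yet no infinite tower of prefixes between them. Concretely, K = {a,b}* a and L = { a^m (b a*)^n b | m > n ≥ 0 } have, for every k ≥ 1, a tower of prefixes of height 2k (given by a^k(ba)^i and a^k(ba)^i b for i = 0,…,k−1), but no infinite tower of prefixes. -/
/-- The letter `a` is `false` and `b` is `true`.  `K = {a,b}* a`. -/
def Kreg : Language Bool := {w | ∃ v, w = v ++ [false]}

/-- `L = { a^m (b a*)^n b | m > n ≥ 0 }`. -/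
def Lcf : Language Bool :=
  {w | ∃ (m n : ℕ) (f : Fin n → ℕ), n < m ∧
    w = List.replicate m false ++
      (List.ofFn fun i => true :: List.replicate (f i) false).flatten ++ [true]}

open List

namespace ContextFreeGrammar

section formLanguage

variable {T N : Type*} {I : N → Language T} {w : List T} {u v : List (Symbol T N)}

def formLanguage (I : N → Language T) (u : List (Symbol T N)) : Language T :=
  (u.map fun
    | .terminal t => {[t]}
    | .nonterminal n => I n).prod

@[simp]
lemma mem_formLanguage_nil : w ∈ formLanguage I [] ↔ w = [] := Iff.rfl

@[simp]
lemma mem_formLanguage_terminal_cons {t : T} :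
    w ∈ formLanguage I (.terminal t :: u) ↔ ∃ w' ∈ formLanguage I u, w = t :: w' := by
  simp only [formLanguage, map_cons, prod_cons, Language.mem_mul]
  constructor
  · rintro ⟨_, rfl, w', hw', rfl⟩
    exact ⟨w', hw', rfl⟩
  · rintro ⟨w', hw', rfl⟩
    exact ⟨[t], rfl, w', hw', rfl⟩

@[simp]
lemma mem_formLanguage_nonterminal_cons {n : N} :
    w ∈ formLanguage I (.nonterminal n :: u) ↔
      ∃ w₁ ∈ I n, ∃ w₂ ∈ formLanguage I u, w = w₁ ++ w₂ := by
  simp only [formLanguage, map_cons, prod_cons, Language.mem_mul, eq_comm]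

lemma formLanguage_append : formLanguage I (u ++ v) = formLanguage I u * formLanguage I v := by
  simp only [formLanguage, map_append, prod_append]

lemma mem_formLanguage_map_terminal (w : List T) : w ∈ formLanguage I (w.map .terminal) := by
  induction w with
  | nil => rfl
  | cons t w ih => exact mem_formLanguage_terminal_cons.2 ⟨w, ih, rfl⟩

end formLanguage

variable {T : Type*} (g : ContextFreeGrammar T)

def derivableFrom (n : g.NT) : Language T :=
  {w | g.Derives [.nonterminal n] (w.map .terminal)}

variable {g} {I : g.NT → Language T} {w : List T} {u v : List (Symbol T g.NT)}

lemma formLanguage_antitone_of_produces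
    (hI : ∀ r ∈ g.rules, ∀ w ∈ formLanguage I r.output, w ∈ I r.input) (h : g.Produces u v) :
    formLanguage I v ≤ formLanguage I u := by
  obtain ⟨r, hr, hrw⟩ := h
  obtain ⟨p, q, rfl, rfl⟩ := hrw.exists_parts
  simp only [formLanguage_append]
  gcongr
  intro x hx
  exact mem_formLanguage_nonterminal_cons.2 ⟨x, hI r hr x hx, [], rfl, x.append_nil.symm⟩

lemma formLanguage_antitone_of_derives
    (hI : ∀ r ∈ g.rules, ∀ w ∈ formLanguage I r.output, w ∈ I r.input) (h : g.Derives u v) :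
    formLanguage I v ≤ formLanguage I u := by
  induction h with
  | refl => exact le_rfl
  | tail _ hp ih => exact (formLanguage_antitone_of_produces hI hp).trans ih

lemma language_le_of_rules (hI : ∀ r ∈ g.rules, ∀ w ∈ formLanguage I r.output, w ∈ I r.input) :
    g.language ≤ I g.initial := by
  intro w hw
  obtain ⟨w₁, hw₁, _, rfl, rfl⟩ := mem_formLanguage_nonterminal_cons.1 <|
    formLanguage_antitone_of_derives hI hw (mem_formLanguage_map_terminal w)
  rwa [append_nil]

lemma derives_of_mem_formLanguage_derivableFrom (hw : w ∈ formLanguage g.derivableFrom u) :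
    g.Derives u (w.map .terminal) := by
  induction u generalizing w with
  | nil => simp_all [Derives.refl]
  | cons s u ih =>
    cases s with
    | terminal t =>
      obtain ⟨w', hw', rfl⟩ := mem_formLanguage_terminal_cons.1 hw
      exact (ih hw').append_left [.terminal t]
    | nonterminal n =>
      obtain ⟨w₁, hw₁, w₂, hw₂, rfl⟩ := mem_formLanguage_nonterminal_cons.1 hw
      rw [map_append]
      exact (hw₁.append_right u).trans ((ih hw₂).append_left _)

lemma mem_derivableFrom_of_rule {r : ContextFreeRule T g.NT} (hr : r ∈ g.rules)
    (hw : w ∈ formLanguage g.derivableFrom r.output) : w ∈ g.derivableFrom r.input :=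
  Produces.trans_derives ⟨r, hr, .input_output⟩ (derives_of_mem_formLanguage_derivableFrom hw)

end ContextFreeGrammar

namespace List.IsPrefix

variable {α : Type*} [BEq α] [LawfulBEq α] {u v : List α} {a : α}

lemma count_lt_count (huv : u <+: v) (hne : u ≠ v) (hv : v.getLast? = some a) :
    u.count a < v.count a := by
  obtain ⟨t, rfl⟩ := huv
  have ht : t ≠ [] := by rintro rfl; simp at hne
  rw [getLast?_append_of_ne_nil _ ht] at hv
  have := count_pos_iff.2 (mem_of_getLast? hv)
  rw [count_append]
  omega

lemma idxOf_eq (huv : u <+: v) (ha : a ∈ u) : v.idxOf a = u.idxOf a := by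
  obtain ⟨t, rfl⟩ := huv
  exact idxOf_append_of_mem ha

end List.IsPrefix

theorem not_exists_strictPrefixChain {α : Type*} [BEq α] [LawfulBEq α] {L : Set (List α)}
    {a : α} (hlast : ∀ w ∈ L, w.getLast? = some a) (hcount : ∀ w ∈ L, w.count a ≤ w.idxOf a) :
    ¬ ∃ u : ℕ → List α, ∀ i, u i ∈ L ∧ u i <+: u (i + 1) ∧ u i ≠ u (i + 1) := by
  rintro ⟨u, hu⟩
  have hidx : ∀ i, (u i).idxOf a = (u 0).idxOf a := fun i => by
    induction i with
    | zero => rfl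
    | succ i ih => rw [(hu i).2.1.idxOf_eq (mem_of_getLast? (hlast _ (hu i).1)), ih]
  have hcount_ge : ∀ i, i ≤ (u i).count a := fun i => by
    induction i with
    | zero => exact Nat.zero_le _
    | succ i ih =>
      have := (hu i).2.1.count_lt_count (hu i).2.2 (hlast _ (hu (i + 1)).1)
      omega
  have hle := hcount _ (hu ((u 0).idxOf a + 1)).1
  rw [hidx ((u 0).idxOf a + 1)] at hle
  have := hcount_ge ((u 0).idxOf a + 1)
  omega

namespace InfPrefTower

variable {α : Type*} {K L : Set (List α)} {w : ℕ → List α}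

lemma exists_mem_right (h : InfPrefTower K L w) : ∃ s, w s ∈ L :=
  h.1.elim (fun hK => ⟨1, (h.2 0).2.1 hK⟩) fun hL => ⟨0, hL⟩

lemma mem_right_add_two (h : InfPrefTower K L w) {s : ℕ} (hs : w s ∈ L) : w (s + 2) ∈ L :=
  (h.2 (s + 1)).2.1 ((h.2 s).2.2 hs)

lemma ne_add_two (h : InfPrefTower K L w) (hKL : Disjoint K L) {s : ℕ} (hs : w s ∈ L) :
    w s ≠ w (s + 2) := by
  intro heq
  have hlen : (w s).length = (w (s + 1)).length :=
    le_antisymm (h.2 s).1.length_le (heq ▸ (h.2 (s + 1)).1.length_le)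
  exact Set.disjoint_left.1 hKL ((h.2 s).1.eq_of_length hlen ▸ (h.2 s).2.2 hs) hs

theorem exists_strictPrefixChain (h : InfPrefTower K L w) (hKL : Disjoint K L) :
    ∃ u : ℕ → List α, ∀ i, u i ∈ L ∧ u i <+: u (i + 1) ∧ u i ≠ u (i + 1) := by
  obtain ⟨s, hs⟩ := h.exists_mem_right
  have hmem : ∀ i, w (s + 2 * i) ∈ L := fun i => by
    induction i with
    | zero => exact hs
    | succ i ih => exact h.mem_right_add_two ih
  refine ⟨fun i => w (s + 2 * i), fun i => ⟨hmem i, ?_, h.ne_add_two hKL (hmem i)⟩⟩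
  exact (h.2 _).1.trans (h.2 _).1

end InfPrefTower

-- `blocks [p₁, …, pₙ] = (b a^p₁) ⋯ (b a^pₙ)`, with `a = false` and `b = true`.
def blocks (l : List ℕ) : List Bool := l.flatMap fun p => true :: replicate p false

lemma blocks_append_singleton (l : List ℕ) (p : ℕ) :
    blocks (l ++ [p]) = blocks l ++ true :: replicate p false := by
  simp [blocks]

lemma blocks_replicate (k p : ℕ) :
    blocks (replicate k p) = (replicate k (true :: replicate p false)).flatten := by
  simp [blocks, flatMap]

lemma count_true_blocks (l : List ℕ) : (blocks l).count true = l.length := by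
  simp [blocks, count_flatMap, Function.comp_def, count_replicate]

lemma mem_Lcf_iff {w : List Bool} :
    w ∈ Lcf ↔ ∃ m, ∃ l : List ℕ, l.length < m ∧ w = replicate m false ++ blocks l ++ [true] := by
  constructor
  · rintro ⟨m, n, f, hnm, rfl⟩
    refine ⟨m, ofFn f, by simpa using hnm, ?_⟩
    simp [blocks, flatMap, map_ofFn, Function.comp_def]
  · rintro ⟨m, l, hlm, rfl⟩
    refine ⟨m, l.length, l.get, hlm, ?_⟩
    conv_lhs => rw [blocks, flatMap_def, ← ofFn_get l, map_ofFn]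
    rfl

lemma mem_Kreg_iff {w : List Bool} : w ∈ Kreg ↔ w.getLast? = some false :=
  getLast?_eq_some_iff.symm

lemma getLast?_of_mem_Lcf {w : List Bool} (h : w ∈ Lcf) : w.getLast? = some true := by
  obtain ⟨m, l, -, rfl⟩ := mem_Lcf_iff.1 h
  simp

lemma disjoint_Kreg_Lcf : Disjoint (Kreg : Set (List Bool)) Lcf :=
  Set.disjoint_left.2 fun _ hK hL => by
    simpa using (mem_Kreg_iff.1 hK).symm.trans (getLast?_of_mem_Lcf hL)

lemma count_true_le_idxOf_of_mem_Lcf {w : List Bool} (h : w ∈ Lcf) :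
    w.count true ≤ w.idxOf true := by
  obtain ⟨m, l, hlm, rfl⟩ := mem_Lcf_iff.1 h
  have hidx : (blocks l ++ [true]).idxOf true = 0 := by
    cases l <;> simp [blocks]
  rw [append_assoc, idxOf_append_of_notMem (by simp), hidx]
  simp [count_replicate, count_true_blocks]
  omega

def lastIsFalseDFA : DFA Bool Bool := ⟨fun _ x => !x, false, {true}⟩

theorem isRegular_Kreg : Kreg.IsRegular := by
  refine ⟨Bool, inferInstance, lastIsFalseDFA, Language.ext fun w => ?_⟩
  rcases eq_nil_or_concat w with rfl | ⟨v, x, rfl⟩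
  · simp [DFA.mem_accepts, lastIsFalseDFA, mem_Kreg_iff]
  · simp [DFA.mem_accepts, DFA.eval_append_singleton, lastIsFalseDFA, mem_Kreg_iff]

inductive LcfNT
  | S | X | A
  deriving DecidableEq

def lcfRules : Finset (ContextFreeRule Bool LcfNT) :=
  { ⟨.S, [.terminal false, .nonterminal .S]⟩,
    ⟨.S, [.terminal false, .nonterminal .X, .terminal true]⟩,
    ⟨.X, []⟩,
    ⟨.X, [.terminal false, .nonterminal .X, .terminal true, .nonterminal .A]⟩,
    ⟨.A, []⟩,
    ⟨.A, [.terminal false, .nonterminal .A]⟩ }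

abbrev lcfGrammar : ContextFreeGrammar Bool := ⟨LcfNT, .S, lcfRules⟩

def lcfNTLanguage : LcfNT → Language Bool
  | .S => Lcf
  | .X => {w | ∃ l : List ℕ, w = replicate l.length false ++ blocks l}
  | .A => {w | ∃ p, w = replicate p false}

open ContextFreeGrammar

lemma lcfRules_sound :
    ∀ r ∈ lcfRules, ∀ w ∈ formLanguage lcfNTLanguage r.output, w ∈ lcfNTLanguage r.input := by
  intro r hr w hw
  simp only [lcfRules, Finset.mem_insert, Finset.mem_singleton] at hr
  rcases hr with rfl | rfl | rfl | rfl | rfl | rfl <;>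
    simp only [mem_formLanguage_terminal_cons, mem_formLanguage_nonterminal_cons,
      mem_formLanguage_nil, lcfNTLanguage] at hw ⊢
  · obtain ⟨_, ⟨v, hv, _, rfl, rfl⟩, rfl⟩ := hw
    obtain ⟨m, l, hlm, rfl⟩ := mem_Lcf_iff.1 hv
    exact mem_Lcf_iff.2 ⟨m + 1, l, by omega, by simp [replicate_succ]⟩
  · obtain ⟨_, ⟨_, ⟨l, rfl⟩, _, ⟨_, rfl, rfl⟩, rfl⟩, rfl⟩ := hw
    exact mem_Lcf_iff.2 ⟨l.length + 1, l, by omega, by simp [replicate_succ]⟩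
  · exact ⟨[], hw⟩
  · obtain ⟨_, ⟨_, ⟨l, rfl⟩, _, ⟨_, ⟨_, ⟨p, rfl⟩, _, rfl, rfl⟩, rfl⟩, rfl⟩, rfl⟩ := hw
    exact ⟨l ++ [p], by simp [blocks_append_singleton, replicate_succ]⟩
  · exact ⟨0, hw⟩
  · obtain ⟨_, ⟨_, ⟨p, rfl⟩, _, rfl, rfl⟩, rfl⟩ := hw
    exact ⟨p + 1, by simp [replicate_succ]⟩

lemma replicate_mem_derivableFrom_A (p : ℕ) :
    replicate p false ∈ lcfGrammar.derivableFrom .A := by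
  induction p with
  | zero => exact mem_derivableFrom_of_rule (g := lcfGrammar) (r := ⟨.A, []⟩) (by decide) rfl
  | succ p ih =>
    refine mem_derivableFrom_of_rule (g := lcfGrammar)
      (r := ⟨.A, [.terminal false, .nonterminal .A]⟩) (by decide) ?_
    simp only [mem_formLanguage_terminal_cons, mem_formLanguage_nonterminal_cons,
      mem_formLanguage_nil]
    exact ⟨_, ⟨_, ih, [], rfl, rfl⟩, by simp [replicate_succ]⟩

lemma blocks_mem_derivableFrom_X (l : List ℕ) :
    replicate l.length false ++ blocks l ∈ lcfGrammar.derivableFrom .X := by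
  induction l using reverseRecOn with
  | nil => exact mem_derivableFrom_of_rule (g := lcfGrammar) (r := ⟨.X, []⟩) (by decide) rfl
  | append_singleton l p ih =>
    refine mem_derivableFrom_of_rule (g := lcfGrammar)
      (r := ⟨.X, [.terminal false, .nonterminal .X, .terminal true, .nonterminal .A]⟩)
      (by decide) ?_
    simp only [mem_formLanguage_terminal_cons, mem_formLanguage_nonterminal_cons,
      mem_formLanguage_nil]
    refine ⟨_, ⟨_, ih, _, ⟨_, ⟨_, replicate_mem_derivableFrom_A p, [], rfl, rfl⟩, rfl⟩, rfl⟩, ?_⟩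
    simp [blocks_append_singleton, replicate_succ]

lemma mem_derivableFrom_S {l : List ℕ} {m : ℕ} (hlm : l.length < m) :
    replicate m false ++ blocks l ++ [true] ∈ lcfGrammar.derivableFrom .S := by
  induction m, hlm using Nat.le_induction with
  | base =>
    refine mem_derivableFrom_of_rule (g := lcfGrammar)
      (r := ⟨.S, [.terminal false, .nonterminal .X, .terminal true]⟩) (by decide) ?_
    simp only [mem_formLanguage_terminal_cons, mem_formLanguage_nonterminal_cons,
      mem_formLanguage_nil]
    exact ⟨_, ⟨_, blocks_mem_derivableFrom_X l, _, ⟨[], rfl, rfl⟩, rfl⟩, by simp [replicate_succ]⟩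
  | succ m _ ih =>
    refine mem_derivableFrom_of_rule (g := lcfGrammar)
      (r := ⟨.S, [.terminal false, .nonterminal .S]⟩) (by decide) ?_
    simp only [mem_formLanguage_terminal_cons, mem_formLanguage_nonterminal_cons,
      mem_formLanguage_nil]
    exact ⟨_, ⟨_, ih, [], rfl, rfl⟩, by simp [replicate_succ]⟩

lemma lcfGrammar_language : lcfGrammar.language = Lcf := by
  refine le_antisymm (language_le_of_rules (g := lcfGrammar) (I := lcfNTLanguage) lcfRules_sound)
    fun w hw => ?_
  obtain ⟨m, l, hlm, rfl⟩ := mem_Lcf_iff.1 hw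
  exact mem_derivableFrom_S hlm

theorem isContextFree_Lcf : Lcf.IsContextFree := ⟨lcfGrammar, lcfGrammar_language⟩

lemma replicate_append_replicate_mem_Lcf (j : ℕ) :
    replicate (j + 1) false ++ replicate (j + 1) true ∈ Lcf :=
  mem_Lcf_iff.2 ⟨j + 1, replicate j 0, by simp, by simp [blocks_replicate, replicate_succ']⟩

lemma leftQuotient_replicate_ne {i j : ℕ} (hij : i < j) :
    Lcf.leftQuotient (replicate i false) ≠ Lcf.leftQuotient (replicate j false) := by
  intro heq
  obtain ⟨k, rfl⟩ := Nat.exists_eq_add_of_lt hij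
  have hmem : replicate (i + k + 1) true ∈ Lcf.leftQuotient (replicate i false) :=
    heq ▸ replicate_append_replicate_mem_Lcf (i + k)
  have := count_true_le_idxOf_of_mem_Lcf hmem
  rw [idxOf_append_of_notMem (by simp)] at this
  simp [count_replicate, replicate_succ] at this

theorem not_isRegular_Lcf : ¬ Lcf.IsRegular := fun h =>
  Set.infinite_range_of_injective (.of_lt_imp_ne fun _ _ => leftQuotient_replicate_ne)
    (h.finite_range_leftQuotient.subset (Set.range_subset_iff.2 fun _ => ⟨_, rfl⟩))

lemma replicate_append_flatten_mem_Kreg {k : ℕ} (hk : 1 ≤ k) (q : ℕ) :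
    replicate k false ++ (replicate q [true, false]).flatten ∈ Kreg := by
  rw [mem_Kreg_iff]
  cases q with
  | zero => simp [getLast?_replicate]; omega
  | succ q => simp [replicate_succ']

lemma replicate_append_flatten_append_true_mem_Lcf {k q : ℕ} (hq : q < k) :
    replicate k false ++ (replicate q [true, false]).flatten ++ [true] ∈ Lcf :=
  mem_Lcf_iff.2 ⟨k, replicate q 1, by simpa using hq, by rw [blocks_replicate]; rfl⟩

theorem prefTower_Kreg_Lcf {k : ℕ} (hk : 1 ≤ k) :
    PrefTower (Kreg : Set (List Bool)) (Lcf : Set (List Bool)) (2 * k)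
      (fun j => replicate k false ++ (replicate (j / 2) [true, false]).flatten ++
        if j % 2 = 1 then [true] else []) := by
  have hKL := Set.disjoint_left.1 disjoint_Kreg_Lcf
  refine ⟨fun _ => Or.inl ?_, fun i hi => ?_⟩
  · simp only [Nat.zero_div, Nat.zero_mod, zero_ne_one, if_false, append_nil]
    exact replicate_append_flatten_mem_Kreg hk 0
  obtain ⟨q, rfl | rfl⟩ := Nat.even_or_odd' i
  · have hK := replicate_append_flatten_mem_Kreg hk q
    have hL := replicate_append_flatten_append_true_mem_Lcf (k := k) (q := q) (by omega)
    simp only [show 2 * q / 2 = q by omega, show (2 * q + 1) / 2 = q by omega,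
      show 2 * q % 2 = 0 by omega, show (2 * q + 1) % 2 = 1 by omega, zero_ne_one, if_false,
      if_true, append_nil]
    exact ⟨prefix_append _ _, fun _ => hL, fun h => absurd h (hKL hK)⟩
  · have hL := replicate_append_flatten_append_true_mem_Lcf (k := k) (q := q) (by omega)
    have hK := replicate_append_flatten_mem_Kreg hk (q + 1)
    simp only [show (2 * q + 1) / 2 = q by omega, show (2 * q + 1 + 1) / 2 = q + 1 by omega,
      show (2 * q + 1) % 2 = 1 by omega, show (2 * q + 1 + 1) % 2 = 0 by omega, zero_ne_one,
      if_false, if_true, append_nil]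
    exact ⟨⟨[false], by simp [replicate_succ']⟩, fun h => absurd hL (hKL h), fun _ => hK⟩

theorem not_exists_infPrefTower_Kreg_Lcf :
    ¬ ∃ w : ℕ → List Bool, InfPrefTower (Kreg : Set (List Bool)) (Lcf : Set (List Bool)) w :=
  fun ⟨_, hw⟩ => not_exists_strictPrefixChain (fun _ => getLast?_of_mem_Lcf)
    (fun _ => count_true_le_idxOf_of_mem_Lcf) (hw.exists_strictPrefixChain disjoint_Kreg_Lcf)

theorem pref_towers_arbitrary_no_infinite :
    Kreg.IsRegular ∧ Lcf.IsContextFree ∧ ¬ Lcf.IsRegular ∧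
    (∀ k : ℕ, 1 ≤ k →
      PrefTower (Kreg : Set (List Bool)) (Lcf : Set (List Bool)) (2 * k)
        (fun j => List.replicate k false ++
          (List.replicate (j / 2) [true, false]).flatten ++
          if j % 2 = 1 then [true] else [])) ∧
    ¬ ∃ w : ℕ → List Bool,
      InfPrefTower (Kreg : Set (List Bool)) (Lcf : Set (List Bool)) w :=
  ⟨isRegular_Kreg, isContextFree_Lcf, not_isRegular_Lcf, fun _ => prefTower_Kreg_Lcf,
    not_exists_infPrefTower_Kreg_Lcf⟩
end

section
/- The minimal DFA of the language L(A_m) (the NFA from the exponential lower-bound construction) has exactly 2^{m+1} states: in the subset construction from the initial set {0,1,…,m}, every subset of {0,…,m} is reachable and any two distinct subsets are distinguishable. -/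
namespace DFA

variable {α σ : Type*} (M : DFA α σ)

theorem leftQuotients_accepts :
    leftQuotients (M.accepts : Set (List α)) = Set.range (M.acceptsFrom ∘ M.eval) := by
  rw [← Language.leftQuotient_accepts]
  ext S
  exact exists_congr fun _ => eq_comm

theorem ncard_leftQuotients_accepts (hreach : ∀ s, ∃ x, M.eval x = s)
    (hdist : ∀ s t, s ≠ t → ∃ y, ¬ (M.evalFrom s y ∈ M.accept ↔ M.evalFrom t y ∈ M.accept)) :
    (leftQuotients (M.accepts : Set (List α))).ncard = Nat.card σ := by
  have hinj : Function.Injective M.acceptsFrom := by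
    intro s t hst
    by_contra hne
    obtain ⟨y, hy⟩ := hdist s t hne
    exact hy (by rw [← mem_acceptsFrom, ← mem_acceptsFrom, hst])
  rw [leftQuotients_accepts, Set.range_comp, Set.range_eq_univ.mpr hreach, Set.image_univ]
  exact Set.ncard_range_of_injective hinj

end DFA

namespace expNFA

variable {m : ℕ}

theorem mem_toDFA_accept {S : Set (Fin (m + 1))} : S ∈ (expNFA m).toDFA.accept ↔ 0 ∈ S := by
  simp only [NFA.toDFA, expNFA, Set.mem_ofPred_eq, Fin.val_eq_zero_iff, exists_eq_right]

theorem stepSet_of_Iic_subset {S : Set (Fin (m + 1))} {i : Fin (m + 1)} (hS : Set.Iic i ⊆ S) :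
    (expNFA m).stepSet S i = S \ {i} := by
  ext j
  simp only [NFA.mem_stepSet, expNFA, Set.mem_ofPred_eq, Set.mem_sdiff, Set.mem_singleton_iff]
  constructor
  · rintro ⟨s, hs, ⟨hi, hs1, rfl⟩ | ⟨-, hsi, rfl⟩ | ⟨hsi, -, hji⟩⟩
    · exact ⟨hs, by omega⟩
    · exact ⟨hs, by omega⟩
    · exact ⟨hS (by simp only [Set.mem_Iic]; omega), by omega⟩
  · rintro ⟨hj, hji⟩
    rcases lt_or_gt_of_ne hji with hlt | hgt
    · exact ⟨i, hS Set.self_mem_Iic, Or.inr (Or.inr ⟨rfl, by omega, hlt⟩)⟩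
    · exact ⟨j, hj, by omega⟩

theorem zero_mem_stepSet_iff {S : Set (Fin (m + 1))} {i : Fin (m + 1)} (hi : i ≠ 0) :
    0 ∈ (expNFA m).stepSet S i ↔ i ∈ S := by
  rw [← Fin.val_ne_zero_iff] at hi
  simp only [NFA.mem_stepSet, expNFA, Set.mem_ofPred_eq, Fin.val_zero, Fin.ext_iff]
  constructor
  · rintro ⟨s, hs, h⟩
    obtain rfl : s = i := by ext; omega
    exact hs
  · exact fun h => ⟨i, h, by omega⟩

end expNFA

namespace expNFA

variable {m : ℕ}

theorem exists_evalFrom_union_eq (Z : Set (Fin (m + 1))) (n : ℕ) :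
    ∃ x, (expNFA m).toDFA.evalFrom (Z ∪ {j | (j : ℕ) < n}) x = Z := by
  induction n with
  | zero => exact ⟨[], by simp⟩
  | succ n ih =>
    obtain ⟨x, hx⟩ := ih
    by_cases h : ∃ i : Fin (m + 1), (i : ℕ) = n ∧ i ∉ Z
    · obtain ⟨i, rfl, hiZ⟩ := h
      have hIic : Set.Iic i ⊆ Z ∪ {j | (j : ℕ) < i + 1} := fun j hj =>
        Or.inr (Nat.lt_succ_of_le hj)
      have hstep : (Z ∪ {j | (j : ℕ) < i + 1}) \ {i} = Z ∪ {j | (j : ℕ) < i} := by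
        ext j
        by_cases hji : j = i
        · subst hji; simp [hiZ]
        · have hlt : (j : ℕ) < i + 1 ↔ (j : ℕ) < i := by
            have := Fin.val_ne_of_ne hji
            omega
          simp only [Set.mem_sdiff, Set.mem_union, Set.mem_ofPred_eq, Set.mem_singleton_iff, hlt,
            hji, not_false_eq_true, and_true]
      refine ⟨i :: x, ?_⟩
      change (expNFA m).toDFA.evalFrom ((expNFA m).stepSet _ i) x = Z
      rw [stepSet_of_Iic_subset hIic, hstep, hx]
    · push Not at h
      have hset : Z ∪ {j | (j : ℕ) < n + 1} = Z ∪ {j | (j : ℕ) < n} := by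
        ext j
        by_cases hjn : (j : ℕ) = n
        · simp [hjn, h j hjn]
        · have hlt : (j : ℕ) < n + 1 ↔ (j : ℕ) < n := by omega
          simp only [Set.mem_union, Set.mem_ofPred_eq, hlt]
      exact ⟨x, hset ▸ hx⟩

theorem exists_eval_eq (Z : Set (Fin (m + 1))) : ∃ x, (expNFA m).toDFA.eval x = Z := by
  have huniv : Z ∪ {j | (j : ℕ) < m + 1} = Set.univ :=
    Set.eq_univ_of_forall fun j => Or.inr j.isLt
  obtain ⟨x, hx⟩ := exists_evalFrom_union_eq Z (m + 1)
  exact ⟨x, by rwa [huniv] at hx⟩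

theorem exists_word_accept_iff_mem (i : Fin (m + 1)) :
    ∃ y, ∀ S, (expNFA m).toDFA.evalFrom S y ∈ (expNFA m).toDFA.accept ↔ i ∈ S := by
  rcases eq_or_ne i 0 with rfl | hi
  · exact ⟨[], fun S => mem_toDFA_accept⟩
  · exact ⟨[(i : ℕ)], fun S => mem_toDFA_accept.trans (zero_mem_stepSet_iff hi)⟩

end expNFA

theorem minimal_dfa_exp_states (m : ℕ) :
    let D : DFA ℕ (Set (Fin (m + 1))) := (expNFA m).toDFA
    (∀ Z : Set (Fin (m + 1)), ∃ x : List ℕ, D.eval x = Z) ∧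
    (∀ Z Z' : Set (Fin (m + 1)), Z ≠ Z' →
      ∃ y : List ℕ,
        ¬ (D.evalFrom Z y ∈ D.accept ↔ D.evalFrom Z' y ∈ D.accept)) ∧
    (leftQuotients ((expNFA m).accepts : Set (List ℕ))).ncard = 2 ^ (m + 1) := by
  intro D
  have hdist : ∀ Z Z' : Set (Fin (m + 1)), Z ≠ Z' →
      ∃ y, ¬ (D.evalFrom Z y ∈ D.accept ↔ D.evalFrom Z' y ∈ D.accept) := by
    intro Z Z' hne
    obtain ⟨i, hi⟩ := not_forall.mp (mt Set.ext hne)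
    obtain ⟨y, hy⟩ := expNFA.exists_word_accept_iff_mem i
    exact ⟨y, by rwa [hy, hy]⟩
  refine ⟨expNFA.exists_eval_eq, hdist, ?_⟩
  rw [← NFA.toDFA_correct, D.ncard_leftQuotients_accepts expNFA.exists_eval_eq hdist,
    Nat.card_eq_fintype_card, Fintype.card_set, Fintype.card_fin]
end

section
/- Given two NFAs with at most m and n states respectively whose languages admit no infinite tower of prefixes, every tower of prefixes between their languages has height at most 2^{m+n-1}. -/
/-!
Determinize both automata by the subset construction. For DFAs `A`, `B` with `M` and `N` states
and accepting sets `F_A`, `F_B`, no infinite tower makes the languages disjoint (a common word is a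
constant infinite tower), and along a finite tower `w` the state pairs
`(A.eval (w i), B.eval (w i))` are pairwise distinct: a repetition at `i < j` lets the loop from
`w i` through `w (i + 1)` to `w j` be pumped into an infinite tower. Positions of one parity land
in `F_A × F_Bᶜ`, the others in `F_Aᶜ × F_B`, so with `a = |F_A|`, `b = |F_B|` we get
`⌈r/2⌉ ≤ a (N - b)` and `⌊r/2⌋ ≤ (M - a) b`. Multiplying and using `4 a (M - a) ≤ M ^ 2`,
`4 b (N - b) ≤ N ^ 2` gives `2 r ≤ M N` once `r ≥ 2`, and `M N ≤ 2 ^ (m + n)`.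
-/

section Tower

variable {α : Type*} {K L : Set (List α)} {r : ℕ} {w : ℕ → List α}

theorem InfPrefTower.symm (h : InfPrefTower K L w) : InfPrefTower L K w :=
  ⟨h.1.symm, fun i => ⟨(h.2 i).1, (h.2 i).2.2, (h.2 i).2.1⟩⟩

theorem PrefTower.symm (h : PrefTower K L r w) : PrefTower L K r w :=
  ⟨fun hr => (h.1 hr).symm, fun i hi => ⟨(h.2 i hi).1, (h.2 i hi).2.2, (h.2 i hi).2.1⟩⟩

theorem disjoint_of_not_exists_infPrefTower (h : ¬∃ w, InfPrefTower K L w) : Disjoint K L :=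
  Set.disjoint_left.mpr fun x hK hL =>
    h ⟨fun _ => x, Or.inl hK, fun _ => ⟨List.prefix_rfl, fun _ => hL, fun _ => hK⟩⟩

theorem infPrefTower_of_alternating (hKL : Disjoint K L) (hpre : ∀ i, w i <+: w (i + 1))
    (hK : ∀ i, Even i → w i ∈ K) (hL : ∀ i, Odd i → w i ∈ L) : InfPrefTower K L w := by
  refine ⟨Or.inl (hK 0 Even.zero), fun i => ⟨hpre i, fun hi => ?_, fun hi => ?_⟩⟩
  · rcases Nat.even_or_odd i with he | ho
    · exact hL _ he.add_one
    · exact absurd (hL i ho) (Set.disjoint_left.mp hKL hi)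
  · rcases Nat.even_or_odd i with he | ho
    · exact absurd hi (Set.disjoint_left.mp hKL (hK i he))
    · exact hK _ ho.add_one

theorem PrefTower.prefix (h : PrefTower K L r w) {i j : ℕ} (hij : i ≤ j) (hj : j < r) :
    w i <+: w j := by
  induction j, hij using Nat.le_induction with
  | base => exact List.prefix_rfl
  | succ j _ ih => exact (ih (by omega)).trans (h.2 j hj).1

theorem PrefTower.mem_of_parity (h : PrefTower K L r w) (h0 : w 0 ∈ K) {i : ℕ} (hi : i < r) :
    (Even i → w i ∈ K) ∧ (Odd i → w i ∈ L) := by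
  induction i with
  | zero => exact ⟨fun _ => h0, fun ho => absurd ho Nat.not_odd_zero⟩
  | succ i ih =>
    obtain ⟨ihK, ihL⟩ := ih (by omega)
    exact ⟨fun he => (h.2 i hi).2.2 (ihL (Nat.not_even_iff_odd.mp (Nat.even_add_one.mp he))),
      fun ho => (h.2 i hi).2.1 (ihK (Nat.not_odd_iff_even.mp (Nat.odd_add_one.mp ho)))⟩

theorem PrefTower.mem_union (h : PrefTower K L r w) {i : ℕ} (hi : i < r) : w i ∈ K ∪ L := by
  rcases h.1 (by omega) with h0 | h0 <;> rcases Nat.even_or_odd i with he | ho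
  · exact Or.inl ((h.mem_of_parity h0 hi).1 he)
  · exact Or.inr ((h.mem_of_parity h0 hi).2 ho)
  · exact Or.inr ((h.symm.mem_of_parity h0 hi).1 he)
  · exact Or.inl ((h.symm.mem_of_parity h0 hi).2 ho)

end Tower

theorem Nat.two_mul_le_mul_of_halves_le_mul {r x x' y y' : ℕ} (hr : 2 ≤ r)
    (hK : (r + 1) / 2 ≤ x * y') (hL : r / 2 ≤ x' * y) : 2 * r ≤ (x + x') * (y + y') := by
  have hsq : r ^ 2 ≤ 4 * ((r + 1) / 2 * (r / 2)) + 1 := by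
    rcases Nat.even_or_odd' r with ⟨k, rfl | rfl⟩
    · rw [show (2 * k + 1) / 2 = k by omega, show 2 * k / 2 = k by omega]; nlinarith
    · rw [show (2 * k + 1 + 1) / 2 = k + 1 by omega, show (2 * k + 1) / 2 = k by omega]
      nlinarith
  have hprod : 16 * ((r + 1) / 2 * (r / 2)) ≤ ((x + x') * (y + y')) ^ 2 :=
    calc 16 * ((r + 1) / 2 * (r / 2)) ≤ (4 * x * x') * (4 * y * y') := by
          nlinarith [Nat.mul_le_mul hK hL]
      _ ≤ (x + x') ^ 2 * (y + y') ^ 2 :=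
          Nat.mul_le_mul (four_mul_le_sq_add x x') (four_mul_le_sq_add y y')
      _ = ((x + x') * (y + y')) ^ 2 := (mul_pow _ _ _).symm
  by_contra! hlt
  generalize (x + x') * (y + y') = P at hprod hlt
  nlinarith [Nat.mul_le_mul hlt hlt, Nat.mul_le_mul hr hr]

def alternatingPump {α : Type*} (u d e : List α) : ℕ → List α
  | 0 => u
  | i + 1 => alternatingPump u d e i ++ if Even i then d else e

namespace DFA

variable {α σ τ : Type*}

theorem eval_append (M : DFA α σ) (x y : List α) : M.eval (x ++ y) = M.evalFrom (M.eval x) y :=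
  M.evalFrom_of_append _ x y

theorem eval_alternatingPump (M : DFA α σ) {u d e : List α}
    (hloop : M.eval (u ++ d ++ e) = M.eval u) (i : ℕ) :
    M.eval (alternatingPump u d e i) = if Even i then M.eval u else M.eval (u ++ d) := by
  induction i with
  | zero => simp [alternatingPump]
  | succ i ih =>
    rw [alternatingPump, eval_append, ih]
    by_cases he : Even i
    · rw [if_pos he, if_pos he, if_neg (by simpa [Nat.even_add_one] using he), eval_append]
    · rw [if_neg he, if_neg he, if_pos (Nat.even_add_one.mpr he), ← eval_append, hloop]

theorem exists_infPrefTower_of_eval_loop (A : DFA α σ) (B : DFA α τ)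
    (hAB : Disjoint (A.accepts : Set (List α)) B.accepts) {u d e : List α}
    (hA : A.eval (u ++ d ++ e) = A.eval u) (hB : B.eval (u ++ d ++ e) = B.eval u)
    (hu : u ∈ A.accepts) (hud : u ++ d ∈ B.accepts) :
    ∃ W, InfPrefTower (A.accepts : Set (List α)) B.accepts W := by
  refine ⟨alternatingPump u d e, infPrefTower_of_alternating hAB
    (fun i => List.prefix_append _ _) (fun i he => ?_) (fun i ho => ?_)⟩
  · change _ ∈ A.accepts
    rwa [mem_accepts, eval_alternatingPump A hA, if_pos he]
  · change _ ∈ B.accepts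
    rwa [mem_accepts, eval_alternatingPump B hB, if_neg (Nat.not_even_iff_odd.mpr ho)]

theorem injOn_eval_of_prefTower (A : DFA α σ) (B : DFA α τ)
    (hno : ¬∃ W, InfPrefTower (A.accepts : Set (List α)) B.accepts W) {r : ℕ} {w : ℕ → List α}
    (ht : PrefTower (A.accepts : Set (List α)) B.accepts r w) :
    Set.InjOn (fun i => (A.eval (w i), B.eval (w i))) (Set.Iio r) := by
  have hAB := disjoint_of_not_exists_infPrefTower hno
  intro i hi j hj hij
  simp only [Set.mem_Iio, Prod.mk.injEq] at hi hj hij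
  wlog hlt : i < j generalizing i j
  · rcases (not_lt.mp hlt).eq_or_lt with h | h
    · exact h.symm
    · exact (this hj hi ⟨hij.1.symm, hij.2.symm⟩ h).symm
  obtain ⟨d, hd⟩ := (ht.2 i (by omega)).1
  obtain ⟨e, he⟩ := ht.prefix (Nat.succ_le_of_lt hlt) hj
  have hloop : w i ++ d ++ e = w j := by rw [hd, he]
  rcases ht.mem_union hi with hK | hL
  · have hud : w i ++ d ∈ B.accepts := hd ▸ (ht.2 i (by omega)).2.1 hK
    exact (hno (exists_infPrefTower_of_eval_loop A B hAB (by rw [hloop, hij.1])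
      (by rw [hloop, hij.2]) hK hud)).elim
  · have hud : w i ++ d ∈ A.accepts := hd ▸ (ht.2 i (by omega)).2.2 hL
    obtain ⟨W, hW⟩ := exists_infPrefTower_of_eval_loop B A hAB.symm (by rw [hloop, hij.2])
      (by rw [hloop, hij.1]) hL hud
    exact (hno ⟨W, hW.symm⟩).elim

open Finset

variable [Fintype σ] [Fintype τ]

theorem two_mul_le_card_mul_card_of_prefTower_of_head_mem (A : DFA α σ) (B : DFA α τ)
    (hno : ¬∃ W, InfPrefTower (A.accepts : Set (List α)) B.accepts W) {r : ℕ}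
    {w : ℕ → List α} (ht : PrefTower (A.accepts : Set (List α)) B.accepts r w) (hr : 2 ≤ r)
    (h0 : w 0 ∈ A.accepts) :
    2 * r ≤ Fintype.card σ * Fintype.card τ := by
  classical
  have hAB := disjoint_of_not_exists_infPrefTower hno
  have hinj := injOn_eval_of_prefTower A B hno ht
  set FA : Finset σ := {s | s ∈ A.accept}
  set FB : Finset τ := {s | s ∈ B.accept}
  have hK : (r + 1) / 2 ≤ #FA * #FBᶜ := by
    rw [← card_product, ← card_range ((r + 1) / 2)]
    refine card_le_card_of_injOn (fun i => (A.eval (w (2 * i)), B.eval (w (2 * i))))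
      (fun i hi => ?_) (hinj.comp (fun i _ j _ h => by simpa using h) fun i hi => ?_)
    all_goals simp only [coe_range, Set.mem_Iio] at hi
    · have hmem := (ht.mem_of_parity h0 (show 2 * i < r by omega)).1 (even_two_mul i)
      simpa [FA, FB] using ⟨hmem, Set.disjoint_left.mp hAB hmem⟩
    · simp only [Set.mem_Iio]; omega
  have hL : r / 2 ≤ #FAᶜ * #FB := by
    rw [← card_product, ← card_range (r / 2)]
    refine card_le_card_of_injOn (fun i => (A.eval (w (2 * i + 1)), B.eval (w (2 * i + 1))))
      (fun i hi => ?_) (hinj.comp (fun i _ j _ h => by simpa using h) fun i hi => ?_)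
    all_goals simp only [coe_range, Set.mem_Iio] at hi
    · have hmem := (ht.mem_of_parity h0 (show 2 * i + 1 < r by omega)).2 (odd_two_mul_add_one i)
      simpa [FA, FB] using ⟨Set.disjoint_right.mp hAB hmem, hmem⟩
    · simp only [Set.mem_Iio]; omega
  have := Nat.two_mul_le_mul_of_halves_le_mul hr hK hL
  rwa [card_add_card_compl, card_add_card_compl] at this

theorem two_mul_le_card_mul_card_of_prefTower (A : DFA α σ) (B : DFA α τ)
    (hno : ¬∃ W, InfPrefTower (A.accepts : Set (List α)) B.accepts W) {r : ℕ}
    {w : ℕ → List α} (ht : PrefTower (A.accepts : Set (List α)) B.accepts r w) (hr : 2 ≤ r) :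
    2 * r ≤ Fintype.card σ * Fintype.card τ := by
  rcases ht.1 (by omega) with h0 | h0
  · exact two_mul_le_card_mul_card_of_prefTower_of_head_mem A B hno ht hr h0
  · have hno' : ¬∃ W, InfPrefTower (B.accepts : Set (List α)) A.accepts W :=
      fun ⟨W, hW⟩ => hno ⟨W, hW.symm⟩
    rw [mul_comm (Fintype.card σ)]
    exact two_mul_le_card_mul_card_of_prefTower_of_head_mem B A hno' ht.symm hr h0

end DFA

theorem nfa_pref_tower_height_le {α σA σB : Type*} [Fintype σA] [Fintype σB]
    (A : NFA α σA) (B : NFA α σB) (m n : ℕ)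
    (hm : Fintype.card σA ≤ m) (hn : Fintype.card σB ≤ n)
    (hno : ¬ ∃ w : ℕ → List α,
      InfPrefTower (A.accepts : Set (List α)) (B.accepts : Set (List α)) w) :
    ∀ (r : ℕ) (w : ℕ → List α),
      PrefTower (A.accepts : Set (List α)) (B.accepts : Set (List α)) r w →
        r ≤ 2 ^ (m + n - 1) := by
  intro r w ht
  rcases Nat.lt_or_ge r 2 with hr | hr
  · exact (Nat.le_of_lt_succ hr).trans Nat.one_le_two_pow
  rw [← A.toDFA_correct, ← B.toDFA_correct] at hno ht
  have hsub := A.toDFA.two_mul_le_card_mul_card_of_prefTower B.toDFA hno ht hr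
  rw [Fintype.card_set, Fintype.card_set, ← pow_add] at hsub
  have hmn : 2 ^ (Fintype.card σA + Fintype.card σB) ≤ 2 ^ (m + n) :=
    Nat.pow_le_pow_right two_pos (by omega)
  obtain ⟨k, hk⟩ : ∃ k, m + n = k + 1 := Nat.exists_eq_succ_of_ne_zero fun h => by
    rw [h] at hmn; omega
  rw [hk, pow_succ] at hmn
  rw [hk, Nat.add_sub_cancel]
  omega
end

section
/- Let A and B be NFAs with disjoint languages. If the product automaton A × B contains a pattern (S, σ, σ₁, σ₂, τ, τ₁, τ₂) — i.e., a nontrivial strongly connected component S reachable from the initial state containing σ, σ₂, τ, τ₂, with σ₁ ∈ F_A × Q_B and τ₁ ∈ Q_A × F_B such that σ₁ and σ₂ are reachable from σ under a common string and τ₁ and τ₂ are reachable from τ under a common string — then there exists an infinite tower of prefixes between L(A) and L(B). -/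
/-- The product automaton `A × B`. -/
def prodNFA {α σA σB : Type*} (A : NFA α σA) (B : NFA α σB) :
    NFA α (σA × σB) where
  step p c := A.step p.1 c ×ˢ B.step p.2 c
  start := A.start ×ˢ B.start
  accept := A.accept ×ˢ B.accept

/-- `q` is reachable from `p` in the NFA `P` (under some string). -/
def Reaches {α σ : Type*} (P : NFA α σ) (p q : σ) : Prop :=
  ∃ w : List α, q ∈ P.evalFrom {p} w

/-- A pattern `(S, σ, σ₁, σ₂, τ, τ₁, τ₂)` of the automata `A` and `B`:
`σ, σ₂, τ, τ₂` lie in a common nontrivial strongly connected component of the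
product automaton (expressed by mutual reachability along a cycle through them,
together with the existence of a nonempty cycle, i.e. an edge, at `σ`), this
component is reachable from the initial state, `σ₁ ∈ F_A × Q_B` and
`τ₁ ∈ Q_A × F_B`, `σ₁` and `σ₂` are reachable from `σ` under a common string,
and `τ₁` and `τ₂` are reachable from `τ` under a common string. -/
def HasPattern {α σA σB : Type*} (A : NFA α σA) (B : NFA α σB) : Prop :=
  ∃ (s s1 s2 t t1 t2 : σA × σB) (x y : List α),
    s1.1 ∈ A.accept ∧ t1.2 ∈ B.accept ∧
    (∃ u : List α, s ∈ (prodNFA A B).eval u) ∧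
    Reaches (prodNFA A B) s s2 ∧ Reaches (prodNFA A B) s2 t ∧
    Reaches (prodNFA A B) t t2 ∧ Reaches (prodNFA A B) t2 s ∧
    (∃ z : List α, z ≠ [] ∧ s ∈ (prodNFA A B).evalFrom {s} z) ∧
    s1 ∈ (prodNFA A B).evalFrom {s} x ∧ s2 ∈ (prodNFA A B).evalFrom {s} x ∧
    t1 ∈ (prodNFA A B).evalFrom {t} y ∧ t2 ∈ (prodNFA A B).evalFrom {t} y

namespace TowerAux

theorem evalFrom_append {α σ : Type*} (P : NFA α σ) (S : Set σ) (a b : List α) :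
    P.evalFrom S (a ++ b) = P.evalFrom (P.evalFrom S a) b := by
  simp [NFA.evalFrom, List.foldl_append]

theorem stepSet_mono {α σ : Type*} (P : NFA α σ) {S T : Set σ} (h : S ⊆ T) (c : α) :
    P.stepSet S c ⊆ P.stepSet T c := by
  intro p hp
  simp only [NFA.stepSet, Set.mem_iUnion] at hp ⊢
  obtain ⟨q, hq, hpq⟩ := hp
  exact ⟨q, h hq, hpq⟩

theorem evalFrom_mono {α σ : Type*} (P : NFA α σ) {S T : Set σ} (h : S ⊆ T) (w : List α) :
    P.evalFrom S w ⊆ P.evalFrom T w := by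
  induction w generalizing S T with
  | nil => simpa using h
  | cons c w ih =>
    simp only [NFA.evalFrom, List.foldl_cons] at *
    exact ih (stepSet_mono P h c)

theorem mem_evalFrom_append {α σ : Type*} (P : NFA α σ) {S : Set σ} {q r : σ} {w1 w2 : List α}
    (h1 : q ∈ P.evalFrom S w1) (h2 : r ∈ P.evalFrom {q} w2) :
    r ∈ P.evalFrom S (w1 ++ w2) := by
  rw [evalFrom_append]
  exact evalFrom_mono P (by simpa using h1) w2 h2

theorem fst_evalFrom {α σA σB : Type*} (A : NFA α σA) (B : NFA α σB)
    {S : Set (σA × σB)} {SA : Set σA} (hS : ∀ p ∈ S, p.1 ∈ SA)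
    (w : List α) : ∀ p ∈ (prodNFA A B).evalFrom S w, p.1 ∈ A.evalFrom SA w := by
  induction w generalizing S SA with
  | nil => simpa using hS
  | cons c w ih =>
    simp only [NFA.evalFrom, List.foldl_cons] at *
    refine ih (S := (prodNFA A B).stepSet S c) (SA := A.stepSet SA c) ?_
    intro p hp
    simp only [NFA.stepSet, Set.mem_iUnion] at hp ⊢
    obtain ⟨q, hq, hpq⟩ := hp
    exact ⟨q.1, hS q hq, hpq.1⟩

theorem snd_evalFrom {α σA σB : Type*} (A : NFA α σA) (B : NFA α σB)
    {S : Set (σA × σB)} {SB : Set σB} (hS : ∀ p ∈ S, p.2 ∈ SB)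
    (w : List α) : ∀ p ∈ (prodNFA A B).evalFrom S w, p.2 ∈ B.evalFrom SB w := by
  induction w generalizing S SB with
  | nil => simpa using hS
  | cons c w ih =>
    simp only [NFA.evalFrom, List.foldl_cons] at *
    refine ih (S := (prodNFA A B).stepSet S c) (SB := B.stepSet SB c) ?_
    intro p hp
    simp only [NFA.stepSet, Set.mem_iUnion] at hp ⊢
    obtain ⟨q, hq, hpq⟩ := hp
    exact ⟨q.2, hS q hq, hpq.2⟩

end TowerAux

open TowerAux in
theorem infinite_pref_tower_of_pattern {α σA σB : Type*}
    (A : NFA α σA) (B : NFA α σB)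
    (hdisj : Disjoint (A.accepts : Set (List α)) (B.accepts : Set (List α)))
    (hpat : HasPattern A B) :
    ∃ w : ℕ → List α,
      InfPrefTower (A.accepts : Set (List α)) (B.accepts : Set (List α)) w := by
  obtain ⟨s, s1, s2, t, t1, t2, x, y, hs1, ht1, ⟨u, hu⟩, _, ⟨v2, hv2⟩, _, ⟨v4, hv4⟩, _,
    hs1x, hs2x, ht1y, ht2y⟩ := hpat
  set P := prodNFA A B with hP
  set c : List α := x ++ (v2 ++ (y ++ v4)) with hc
  -- `s` loops on `c`
  have hcycle : s ∈ P.evalFrom {s} c := by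
    exact mem_evalFrom_append P hs2x (mem_evalFrom_append P hv2
      (mem_evalFrom_append P ht2y hv4))
  -- iterated loop
  set rep : ℕ → List α := fun n => (List.replicate n c).flatten with hrepdef
  have hrep_succ : ∀ n, rep (n + 1) = rep n ++ c := by
    intro n
    simp [hrepdef, List.replicate_succ']
  have hreach : ∀ n, s ∈ P.eval (u ++ rep n) := by
    intro n
    induction n with
    | zero => simpa [hrepdef] using hu
    | succ n ih =>
      rw [hrep_succ, ← List.append_assoc]
      exact mem_evalFrom_append P ih hcycle
  -- acceptance facts
  have hstartA : ∀ p ∈ P.start, p.1 ∈ A.start := by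
    intro p hp; exact hp.1
  have hstartB : ∀ p ∈ P.start, p.2 ∈ B.start := by
    intro p hp; exact hp.2
  have hA : ∀ n, (u ++ rep n) ++ x ∈ A.accepts := by
    intro n
    have h1 : s1 ∈ P.eval ((u ++ rep n) ++ x) :=
      mem_evalFrom_append P (hreach n) hs1x
    have h2 : s1.1 ∈ A.eval ((u ++ rep n) ++ x) :=
      fst_evalFrom A B hstartA _ s1 h1
    exact ⟨s1.1, hs1, h2⟩
  have hB : ∀ n, (u ++ rep n) ++ (x ++ (v2 ++ y)) ∈ B.accepts := by
    intro n
    have hxy : t1 ∈ P.evalFrom {s} (x ++ (v2 ++ y)) :=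
      mem_evalFrom_append P hs2x (mem_evalFrom_append P hv2 ht1y)
    have h1 : t1 ∈ P.eval ((u ++ rep n) ++ (x ++ (v2 ++ y))) :=
      mem_evalFrom_append P (hreach n) hxy
    have h2 : t1.2 ∈ B.eval ((u ++ rep n) ++ (x ++ (v2 ++ y))) :=
      snd_evalFrom A B hstartB _ t1 h1
    exact ⟨t1.2, ht1, h2⟩
  -- the tower
  refine ⟨fun n => (u ++ rep (n / 2)) ++ (if n % 2 = 0 then x else x ++ (v2 ++ y)), ?_, ?_⟩
  · left; have h0 := hA 0; simp at h0 ⊢; exact h0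
  · intro i
    rcases Nat.even_or_odd i with ⟨k, hk⟩ | ⟨k, hk⟩
    · have e1 : i / 2 = k := by omega
      have e2 : i % 2 = 0 := by omega
      have e3 : (i + 1) / 2 = k := by omega
      have e4 : (i + 1) % 2 = 1 := by omega
      simp only [e1, e2, e3, e4, if_pos rfl, if_neg (by omega : ¬(1 = 0))]
      exact ⟨⟨v2 ++ y, by simp⟩, fun _ => hB k,
        fun hmem => absurd (hA k) (fun h => Set.disjoint_left.mp hdisj h hmem)⟩
    · have e1 : i / 2 = k := by omega
      have e2 : i % 2 = 1 := by omega
      have e3 : (i + 1) / 2 = k + 1 := by omega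
      have e4 : (i + 1) % 2 = 0 := by omega
      simp only [e1, e2, e3, e4, if_neg (by omega : ¬(1 = 0)), if_pos rfl]
      exact ⟨⟨v4 ++ x, by simp [hrep_succ, hc]⟩,
        fun hmem => absurd (hB k) (fun h => Set.disjoint_right.mp hdisj h hmem),
        fun _ => hA (k + 1)⟩
end

section
/- Let A₀ and A₁ be NFAs over an alphabet of cardinality m, each of depth at most n (the depth is the number of states on the longest simple path). If there is no infinite alternating subsequence tower between L(A₀) and L(A₁), then every alternating subsequence tower (w_i)_{i=1}^{r} with w_i ∈ L(A_{i mod 2}) satisfies r ≤ (n^{m+1} − 1)/(n − 1). -/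
/-- The NFA `M` has depth at most `n`: every simple path (a sequence of pairwise
distinct states consecutively joined by transitions) has at most `n` states. -/
def DepthLE {α σ : Type*} (M : NFA α σ) (n : ℕ) : Prop :=
  ∀ l : List σ, l.Chain' (fun p q => ∃ c, q ∈ M.step p c) → l.Nodup →
    l.length ≤ n

/-!
Embed every word of the tower into the top word `w r`: the `i`-th word is read off at a set
`P i` of positions, `P 1 ⊆ ⋯ ⊆ P r`, and its accepting run is indexed by all positions of `w r`,
staying put outside `P i`. Call step `i` covered on an interval if the positions it adds there
lie in disjoint subintervals, on each of which the runs of both the `i`-th and the `(i+1)`-st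
word have a cycle reading every letter that the `(i+1)`-st word has in that subinterval. Pumping
these cycles gives two families of accepted words, each embedding into the other, hence an
infinite tower; so no step is covered on the whole word.

The steps that are not covered on an interval with alphabet `Γ` are counted by induction on `|Γ|`.
Take the last run `τ` without a `Γ`-cycle on the interval; since the depth is `n`, its cyclic
factorization has at most `n` gaps, each missing a letter of `Γ`, separated by at most `n - 1`
cut positions. An earlier uncovered step either adds a cut position, which happens for at most
`n - 1` steps, or is uncovered inside a gap over a smaller alphabet. Hence there are at most
`1 + (n - 1) + n B(|Γ| - 1) = B(|Γ|)` of them, where `B(k) = n + n² + ⋯ + nᵏ`, and `r - 1 ≤ B(m)`.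
-/

open scoped List

namespace TowerHeight

variable {α σ : Type*}

theorem _root_.List.Sublist.filter_mem_eq [DecidableEq α] {l₁ l₂ : List α} (h : l₁ <+ l₂)
    (hl : l₂.Nodup) : l₂.filter (· ∈ l₁) = l₁ := by
  induction h with
  | slnil => rfl
  | cons a h ih =>
    have ha : a ∉ _ := fun ha => (List.nodup_cons.mp hl).1 (h.subset ha)
    simp [ha, ih (List.nodup_cons.mp hl).2]
  | cons_cons a h ih =>
    obtain ⟨ha, hl⟩ := List.nodup_cons.mp hl
    rw [List.filter_cons_of_pos (by simp)]
    conv_rhs => rw [← ih hl]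
    exact congrArg _ (List.filter_congr fun b hb => by
      simp [show b ≠ a from fun e => ha (e ▸ hb)])

theorem exists_greatest_le (p : ℕ → Prop) {j h : ℕ} (hjh : j ≤ h) (hj : p j) :
    ∃ τ, j ≤ τ ∧ τ ≤ h ∧ p τ ∧ ∀ u, τ < u → u ≤ h → ¬ p u := by
  classical
  exact ⟨Nat.findGreatest p h, Nat.le_findGreatest hjh hj, Nat.findGreatest_le h,
    Nat.findGreatest_spec hjh hj, fun u hu huh => Nat.findGreatest_is_greatest hu huh⟩

section Subword

variable (x : ℕ → α)

def subword (S : Finset ℕ) (a b : ℕ) : List α :=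
  ((List.range' a (b - a)).filter (· ∈ S)).map x

variable {x}

theorem mem_subword {S : Finset ℕ} {a b : ℕ} {c : α} :
    c ∈ subword x S a b ↔ ∃ t ∈ S, a ≤ t ∧ t < b ∧ x t = c := by
  simp only [subword, List.mem_map, List.mem_filter, List.mem_range', decide_eq_true_eq]
  constructor
  · rintro ⟨t, ⟨⟨k, hk, rfl⟩, ht⟩, rfl⟩
    exact ⟨_, ht, by omega, by omega, rfl⟩
  · rintro ⟨t, ht, hat, htb, rfl⟩
    exact ⟨t, ⟨⟨t - a, by omega, by omega⟩, ht⟩, rfl⟩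

theorem subword_append {S : Finset ℕ} {a b c : ℕ} (hab : a ≤ b) (hbc : b ≤ c) :
    subword x S a b ++ subword x S b c = subword x S a c := by
  have : List.range' a (b - a) ++ List.range' b (c - b) = List.range' a (c - a) := by
    obtain ⟨k, rfl⟩ := Nat.exists_eq_add_of_le hab
    rw [Nat.add_sub_cancel_left, List.range'_append_1]; congr 1; omega
  simp only [subword, ← List.map_append, ← List.filter_append, this]

theorem subword_succ (S : Finset ℕ) (t : ℕ) :
    subword x S t (t + 1) = if t ∈ S then [x t] else [] := by
  by_cases ht : t ∈ S <;> simp [subword, ht]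

theorem subword_congr {S S' : Finset ℕ} {a b : ℕ}
    (h : ∀ t, a ≤ t → t < b → (t ∈ S ↔ t ∈ S')) : subword x S a b = subword x S' a b := by
  refine congrArg _ (List.filter_congr fun t ht => ?_)
  rw [List.mem_range'] at ht
  obtain ⟨k, hk, rfl⟩ := ht
  simp [h (a + k) le_self_add (by omega)]

theorem subword_eq_nil {S : Finset ℕ} {a b : ℕ} (h : ∀ t, a ≤ t → t < b → t ∉ S) :
    subword x S a b = [] :=
  List.eq_nil_iff_forall_not_mem.mpr fun c hc => by
    obtain ⟨t, ht, hat, htb, -⟩ := mem_subword.mp hc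
    exact h t hat htb ht

theorem subword_subset_subword {S S' : Finset ℕ} {a b a' b' : ℕ} (hS : S ⊆ S') (ha : a' ≤ a)
    (hb : b ≤ b') : subword x S a b ⊆ subword x S' a' b' := fun c hc => by
  obtain ⟨t, ht, hat, htb, rfl⟩ := mem_subword.mp hc
  exact mem_subword.mpr ⟨t, hS ht, by omega, by omega, rfl⟩

theorem exists_subset_of_sublist_subword {u : List α} {S : Finset ℕ} {a b : ℕ}
    (h : u <+ subword x S a b) : ∃ S' ⊆ S, u = subword x S' a b := by
  obtain ⟨l, hl, rfl⟩ := List.sublist_map_iff.mp h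
  refine ⟨l.toFinset, fun t ht => ?_, ?_⟩
  · simpa using (List.mem_filter.mp (hl.subset (List.mem_toFinset.mp ht))).2
  · have hl' := hl.trans List.filter_sublist
    simp only [subword, List.mem_toFinset, hl'.filter_mem_eq List.nodup_range']

theorem subword_range_getD (w : List α) (d : α) :
    subword (fun t => w.getD t d) (Finset.range w.length) 0 w.length = w := by
  apply List.ext_getElem <;> simp +contextual [subword, List.filter_eq_self.mpr]

end Subword

section LazyRun

variable (M : NFA α σ) (x : ℕ → α)

def IsLazyRun (S : Finset ℕ) (F : ℕ → σ) (N : ℕ) : Prop :=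
  ∀ t < N, (t ∈ S → F (t + 1) ∈ M.step (F t) (x t)) ∧ (t ∉ S → F (t + 1) = F t)

variable {M x}

theorem mem_evalFrom_append {p q s : σ} {u v : List α} (hu : q ∈ M.evalFrom {p} u)
    (hv : s ∈ M.evalFrom {q} v) : s ∈ M.evalFrom {p} (u ++ v) := by
  rw [NFA.evalFrom_append, NFA.mem_evalFrom_iff_exists]
  exact ⟨q, hu, hv⟩

theorem IsLazyRun.mem_evalFrom {S : Finset ℕ} {F : ℕ → σ} {N : ℕ} (hF : IsLazyRun M x S F N)
    {a b : ℕ} (hab : a ≤ b) (hb : b ≤ N) : F b ∈ M.evalFrom {F a} (subword x S a b) := by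
  induction b, hab using Nat.le_induction with
  | base => simp [subword]
  | succ b hab ih =>
    rw [← subword_append hab b.le_succ]
    refine mem_evalFrom_append (ih (by omega)) ?_
    rw [subword_succ]
    by_cases hbS : b ∈ S
    · simpa [hbS] using (hF b (by omega)).1 hbS
    · simp [hbS, (hF b (by omega)).2 hbS]

theorem IsLazyRun.eq_of_forall_notMem {S : Finset ℕ} {F : ℕ → σ} {N : ℕ}
    (hF : IsLazyRun M x S F N) {a b : ℕ} (hab : a ≤ b) (hb : b ≤ N)
    (h : ∀ t, a ≤ t → t < b → t ∉ S) : F b = F a := by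
  induction b, hab using Nat.le_induction with
  | base => rfl
  | succ b hab ih =>
    rw [(hF b (by omega)).2 (h b hab b.lt_succ_self)]
    exact ih (by omega) fun t h1 h2 => h t h1 (by omega)

theorem exists_isLazyRun {S : Finset ℕ} {N : ℕ} {Q : Set σ} {q : σ}
    (hq : q ∈ M.evalFrom Q (subword x S 0 N)) :
    ∃ F : ℕ → σ, F 0 ∈ Q ∧ F N = q ∧ IsLazyRun M x S F N := by
  induction N generalizing q with
  | zero => exact ⟨fun _ => q, by simpa [subword] using hq, rfl, fun t ht => by omega⟩
  | succ N ih =>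
    rw [← subword_append N.zero_le N.le_succ, NFA.evalFrom_append,
      NFA.mem_evalFrom_iff_exists] at hq
    obtain ⟨p, hp, hpq⟩ := hq
    obtain ⟨F, hF0, hFN, hF⟩ := ih hp
    refine ⟨Function.update F (N + 1) q, by simpa using hF0, by simp, fun t ht => ?_⟩
    rcases Nat.lt_succ_iff_lt_or_eq.mp ht with ht | rfl
    · simpa [Function.update_of_ne (show t + 1 ≠ N + 1 by omega),
        Function.update_of_ne (show t ≠ N + 1 by omega)] using hF t ht
    · rw [subword_succ] at hpq
      by_cases htS : t ∈ S <;> simp_all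

end LazyRun

section Pumping

def Absorbs (f g : ℕ → List α) : Prop :=
  ∀ T T', (f T).length ≤ T' → f T <+ g T'

theorem Absorbs.append {f g f' g' : ℕ → List α} (h : Absorbs f g) (h' : Absorbs f' g') :
    Absorbs (fun T => f T ++ f' T) (fun T => g T ++ g' T) := fun T T' hT => by
  rw [List.length_append] at hT
  exact (h T T' (by omega)).append (h' T T' (by omega))

theorem absorbs_const {u v : List α} (h : u <+ v) : Absorbs (fun _ => u) (fun _ => v) :=
  fun _ _ _ => h

theorem sublist_flatten_replicate {u c : List α} (hu : u ⊆ c) {T : ℕ}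
    (hT : u.length ≤ T) : u <+ (List.replicate T c).flatten := by
  induction u generalizing T with
  | nil => exact List.nil_sublist _
  | cons a u ih =>
    obtain ⟨T, rfl⟩ := Nat.exists_eq_add_one.mpr (by simp at hT; omega : 0 < T)
    obtain ⟨c₁, c₂, rfl⟩ := List.append_of_mem (hu List.mem_cons_self)
    rw [List.replicate_succ, List.flatten_cons, List.append_assoc]
    refine List.Sublist.trans ?_ (List.sublist_append_right c₁ _)
    refine (ih (List.subset_of_cons_subset hu) (by simp at hT; omega)).trans ?_ |>.cons_cons a
    exact List.sublist_append_right _ _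

theorem absorbs_of_subset {f g : ℕ → List α} {c : List α} (hf : ∀ T, f T ⊆ c)
    (hg : ∀ T, (List.replicate T c).flatten <+ g T) : Absorbs f g := fun T T' hT =>
  (sublist_flatten_replicate (hf T) hT).trans (hg T')

theorem mem_evalFrom_flatten_replicate {M : NFA α σ} {q : σ} {c : List α}
    (hc : q ∈ M.evalFrom {q} c) (T : ℕ) : q ∈ M.evalFrom {q} (List.replicate T c).flatten := by
  induction T with
  | zero => simp
  | succ T ih => rw [List.replicate_succ, List.flatten_cons]; exact mem_evalFrom_append hc ih

theorem IsLazyRun.exists_pumping {M : NFA α σ} {x : ℕ → α} {S : Finset ℕ} {F : ℕ → σ} {N : ℕ}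
    (hF : IsLazyRun M x S F N) {lo a b hi : ℕ} (hlo : lo ≤ a) (hab : a ≤ b) (hb : b ≤ hi)
    (hhi : hi ≤ N) (hloop : F a = F b) :
    ∃ f : ℕ → List α, (∀ T, F hi ∈ M.evalFrom {F lo} (f T)) ∧
      (∀ T, f T ⊆ subword x S lo hi) ∧
      ∀ T, (List.replicate T (subword x S a b)).flatten <+ f T := by
  refine ⟨fun T => subword x S lo a ++ (List.replicate T (subword x S a b)).flatten ++
    subword x S b hi, fun T => ?_, fun T c hc => ?_, fun T => ?_⟩
  · have hcyc := hF.mem_evalFrom hab (by omega)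
    rw [← hloop] at hcyc
    refine mem_evalFrom_append (mem_evalFrom_append (hF.mem_evalFrom hlo (by omega))
      (mem_evalFrom_flatten_replicate hcyc T)) ?_
    rw [hloop]
    exact hF.mem_evalFrom hb hhi
  · simp only [List.mem_append, List.mem_flatten, List.mem_replicate] at hc
    rcases hc with (hc | ⟨_, ⟨-, rfl⟩, hc⟩) | hc
    · exact subword_subset_subword subset_rfl le_rfl (by omega) hc
    · exact subword_subset_subword subset_rfl hlo (by omega) hc
    · exact subword_subset_subword subset_rfl (by omega) le_rfl hc
  · exact (List.sublist_append_right _ _).trans (List.sublist_append_left _ _)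

theorem infSubTower_const {K L : Set (List α)} {u : List α} (hK : u ∈ K) (hL : u ∈ L) :
    InfSubTower K L fun _ => u :=
  ⟨Or.inl hK, fun _ => ⟨List.Sublist.refl u, fun _ => hL, fun _ => hK⟩⟩

theorem exists_infSubTower_of_absorbs {K L : Set (List α)} {f g : ℕ → List α}
    (hf : ∀ T, f T ∈ K) (hg : ∀ T, g T ∈ L) (hfg : Absorbs f g) (hgf : Absorbs g f) :
    ∃ t, InfSubTower K L t := by
  by_cases hKL : ∃ u ∈ K, u ∈ L
  · obtain ⟨u, hK, hL⟩ := hKL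
    exact ⟨_, infSubTower_const hK hL⟩
  push Not at hKL
  -- the pumping exponents grow fast enough for each word to absorb the previous one
  let T : ℕ → ℕ := fun k => (fun t => (f t).length + (g t).length)^[k] 0
  have hT : ∀ k, T (k + 1) = (f (T k)).length + (g (T k)).length := fun k =>
    Function.iterate_succ_apply' _ _ _
  let t : ℕ → List α := fun k => if Even k then f (T k) else g (T k)
  have ht : ∀ k, (Even k → t k ∈ K) ∧ (¬ Even k → t k ∈ L) := fun k => by
    by_cases hk : Even k <;> simp [t, hk, hf, hg]
  refine ⟨t, Or.inl ((ht 0).1 (by decide)), fun k => ⟨?_, fun hk => ?_, fun hk => ?_⟩⟩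
  · by_cases hk : Even k
    · simp only [t, hk, Nat.even_add_one, not_true_eq_false, if_true, if_false]
      exact hfg _ _ (by rw [hT]; omega)
    · simp only [t, hk, Nat.even_add_one, not_false_eq_true, if_true, if_false]
      exact hgf _ _ (by rw [hT]; omega)
  · have hk' : Even k := by_contra fun h => hKL _ hk ((ht k).2 h)
    exact (ht (k + 1)).2 (by simpa [Nat.even_add_one] using hk')
  · have hk' : ¬ Even k := fun h => hKL _ ((ht k).1 h) hk
    exact (ht (k + 1)).1 (by simpa [Nat.even_add_one] using hk')

end Pumping

section Cover

variable (x : ℕ → α)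

def HasCycle (R : ℕ → ℕ → Prop) (S : Finset ℕ) (lo hi : ℕ) (Γ : Finset α) : Prop :=
  ∃ a b, lo ≤ a ∧ a ≤ b ∧ b ≤ hi ∧ R a b ∧ ∀ γ ∈ Γ, γ ∈ subword x S a b

def SortedWithin (lo hi : ℕ) (zs : List (ℕ × ℕ)) : Prop :=
  zs.Pairwise (fun z z' => z.2 ≤ z'.1) ∧ ∀ z ∈ zs, lo ≤ z.1 ∧ z.1 ≤ z.2 ∧ z.2 ≤ hi

variable {x}

theorem HasCycle.mono {R : ℕ → ℕ → Prop} {S : Finset ℕ} {lo hi : ℕ} {Γ Γ' : Finset α}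
    (h : HasCycle x R S lo hi Γ) (hΓ : Γ' ⊆ Γ) : HasCycle x R S lo hi Γ' := by
  obtain ⟨a, b, ha, hab, hb, hR, hcyc⟩ := h
  exact ⟨a, b, ha, hab, hb, hR, fun γ hγ => hcyc γ (hΓ hγ)⟩

theorem SortedWithin.mono {lo hi lo' hi' : ℕ} {zs : List (ℕ × ℕ)} (h : SortedWithin lo' hi' zs)
    (hlo : lo ≤ lo') (hhi : hi' ≤ hi) : SortedWithin lo hi zs :=
  ⟨h.1, fun z hz => ⟨hlo.trans (h.2 z hz).1, (h.2 z hz).2.1, (h.2 z hz).2.2.trans hhi⟩⟩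

theorem SortedWithin.of_cons {lo hi : ℕ} {z : ℕ × ℕ} {zs : List (ℕ × ℕ)}
    (h : SortedWithin lo hi (z :: zs)) :
    lo ≤ z.1 ∧ z.1 ≤ z.2 ∧ z.2 ≤ hi ∧ SortedWithin z.2 hi zs := by
  obtain ⟨hsort, hin⟩ := h
  rw [List.pairwise_cons] at hsort
  exact ⟨(hin z (by simp)).1, (hin z (by simp)).2.1, (hin z (by simp)).2.2, hsort.2,
    fun z' hz' => ⟨hsort.1 z' hz', (hin z' (by simp [hz'])).2⟩⟩

theorem SortedWithin.cons {lo hi : ℕ} {z : ℕ × ℕ} {zs : List (ℕ × ℕ)} (h : SortedWithin z.2 hi zs)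
    (hlo : lo ≤ z.1) (hz : z.1 ≤ z.2) (hhi : z.2 ≤ hi) : SortedWithin lo hi (z :: zs) := by
  refine ⟨List.pairwise_cons.mpr ⟨fun z' hz' => (h.2 z' hz').1, h.1⟩, ?_⟩
  simp only [List.mem_cons, forall_eq_or_imp]
  exact ⟨⟨hlo, hz, hhi⟩, fun z' hz' => (h.mono (hlo.trans hz) le_rfl).2 z' hz'⟩

theorem SortedWithin.append {lo mid hi : ℕ} {zs zs' : List (ℕ × ℕ)} (h : SortedWithin lo mid zs)
    (h' : SortedWithin mid hi zs') (hlo : lo ≤ mid) (hhi : mid ≤ hi) :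
    SortedWithin lo hi (zs ++ zs') := by
  refine ⟨List.pairwise_append.mpr ⟨h.1, h'.1, fun z hz z' hz' => ?_⟩, fun z hz => ?_⟩
  · exact (h.2 z hz).2.2.trans (h'.2 z' hz').1
  · rcases List.mem_append.mp hz with hz | hz
    · exact (h.mono le_rfl hhi).2 z hz
    · exact (h'.mono hlo le_rfl).2 z hz

variable [DecidableEq α]

section

variable (x)

def IsSaturated (R R' : ℕ → ℕ → Prop) (S S' : Finset ℕ) (z : ℕ × ℕ) : Prop :=
  HasCycle x R S z.1 z.2 (subword x S' z.1 z.2).toFinset ∧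
    HasCycle x R' S' z.1 z.2 (subword x S' z.1 z.2).toFinset

def IsSaturatedCover (R R' : ℕ → ℕ → Prop) (S S' : Finset ℕ) (lo hi : ℕ)
    (zs : List (ℕ × ℕ)) : Prop :=
  SortedWithin lo hi zs ∧ (∀ z ∈ zs, IsSaturated x R R' S S' z) ∧
    ∀ p ∈ S' \ S, lo ≤ p → p < hi → ∃ z ∈ zs, z.1 ≤ p ∧ p < z.2

end

variable {σ' : Type*} {M : NFA α σ} {M' : NFA α σ'} {S S' : Finset ℕ} {F : ℕ → σ} {F' : ℕ → σ'}
  {N : ℕ}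

theorem exists_absorbs_of_isSaturated (hS : S ⊆ S') (hF : IsLazyRun M x S F N)
    (hF' : IsLazyRun M' x S' F' N) {z : ℕ × ℕ}
    (hz : IsSaturated x (fun a b => F a = F b) (fun a b => F' a = F' b) S S' z) (hzN : z.2 ≤ N) :
    ∃ f g : ℕ → List α, (∀ T, F z.2 ∈ M.evalFrom {F z.1} (f T)) ∧
      (∀ T, F' z.2 ∈ M'.evalFrom {F' z.1} (g T)) ∧ Absorbs f g ∧ Absorbs g f := by
  obtain ⟨⟨a, b, ha, hab, hb, hloop, hcyc⟩, ⟨a', b', ha', hab', hb', hloop', hcyc'⟩⟩ := hz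
  obtain ⟨f, hf, hfz, hfc⟩ := hF.exists_pumping ha hab hb hzN hloop
  obtain ⟨g, hg, hgz, hgc⟩ := hF'.exists_pumping ha' hab' hb' hzN hloop'
  refine ⟨f, g, hf, hg, absorbs_of_subset (fun T c hc => ?_) hgc,
    absorbs_of_subset (fun T c hc => ?_) hfc⟩
  · exact hcyc' c (List.mem_toFinset.mpr (subword_subset_subword hS le_rfl le_rfl (hfz T hc)))
  · exact hcyc c (List.mem_toFinset.mpr (hgz T hc))

theorem IsSaturatedCover.subword_eq {R R' : ℕ → ℕ → Prop} (hS : S ⊆ S') {pos hi : ℕ}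
    (hzs : IsSaturatedCover x R R' S S' pos hi []) : subword x S pos hi = subword x S' pos hi :=
  subword_congr fun t h1 h2 => ⟨(hS ·), fun ht => by_contra fun htS => by
    simpa using hzs.2.2 t (Finset.mem_sdiff.mpr ⟨ht, htS⟩) h1 h2⟩

theorem IsSaturatedCover.of_cons {R R' : ℕ → ℕ → Prop} {pos hi : ℕ} {z : ℕ × ℕ}
    {zs : List (ℕ × ℕ)} (hzs : IsSaturatedCover x R R' S S' pos hi (z :: zs)) :
    pos ≤ z.1 ∧ z.1 ≤ z.2 ∧ z.2 ≤ hi ∧ IsSaturated x R R' S S' z ∧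
      IsSaturatedCover x R R' S S' pos z.1 [] ∧ IsSaturatedCover x R R' S S' z.2 hi zs := by
  obtain ⟨hsorted, hsat, hcov⟩ := hzs
  obtain ⟨hposz, hz, hzhi, hrest⟩ := hsorted.of_cons
  refine ⟨hposz, hz, hzhi, hsat z (by simp), ⟨⟨by simp, by simp⟩, by simp, fun p hp h1 h2 => ?_⟩,
    ⟨hrest, fun z' hz' => hsat z' (by simp [hz']), fun p hp h1 h2 => ?_⟩⟩
  · obtain ⟨z', hz', hz'p, -⟩ := hcov p hp h1 (by omega)
    rcases List.mem_cons.mp hz' with rfl | hz'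
    · omega
    · have := (hrest.2 z' hz').1
      omega
  · obtain ⟨z', hz', hz'p⟩ := hcov p hp (by omega) h2
    rcases List.mem_cons.mp hz' with rfl | hz'
    · omega
    · exact ⟨z', hz', hz'p⟩

theorem exists_absorbs_of_isSaturatedCover (hS : S ⊆ S') (hF : IsLazyRun M x S F N)
    (hF' : IsLazyRun M' x S' F' N) (zs : List (ℕ × ℕ)) {pos : ℕ} (hpos : pos ≤ N)
    (hzs : IsSaturatedCover x (fun a b => F a = F b) (fun a b => F' a = F' b) S S' pos N zs) :
    ∃ f g : ℕ → List α, (∀ T, F N ∈ M.evalFrom {F pos} (f T)) ∧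
      (∀ T, F' N ∈ M'.evalFrom {F' pos} (g T)) ∧ Absorbs f g ∧ Absorbs g f := by
  induction zs generalizing pos with
  | nil =>
    refine ⟨fun _ => subword x S pos N, fun _ => subword x S pos N, fun _ => ?_, fun _ => ?_,
      absorbs_const (List.Sublist.refl _), absorbs_const (List.Sublist.refl _)⟩
    · exact hF.mem_evalFrom hpos le_rfl
    · exact hzs.subword_eq hS ▸ hF'.mem_evalFrom hpos le_rfl
  | cons z zs ih =>
    obtain ⟨hposz, hz, hzN, hsat, hseg, hrest⟩ := hzs.of_cons
    obtain ⟨fz, gz, hfz, hgz, hfgz, hgfz⟩ := exists_absorbs_of_isSaturated hS hF hF' hsat hzN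
    obtain ⟨f, g, hf, hg, hfg, hgf⟩ := ih hzN hrest
    refine ⟨fun T => subword x S pos z.1 ++ fz T ++ f T,
      fun T => subword x S pos z.1 ++ gz T ++ g T,
      fun T => ?_, fun T => ?_, ((absorbs_const (List.Sublist.refl _)).append hfgz).append hfg,
      ((absorbs_const (List.Sublist.refl _)).append hgfz).append hgf⟩
    · exact mem_evalFrom_append (mem_evalFrom_append (hF.mem_evalFrom hposz (by omega)) (hfz T))
        (hf T)
    · refine mem_evalFrom_append (mem_evalFrom_append ?_ (hgz T)) (hg T)
      exact hseg.subword_eq hS ▸ hF'.mem_evalFrom hposz (by omega)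

theorem exists_accepted_absorbs_of_isSaturatedCover (hS : S ⊆ S') (hF : IsLazyRun M x S F N)
    (hF' : IsLazyRun M' x S' F' N) (h0 : F 0 ∈ M.start) (hN : F N ∈ M.accept)
    (h0' : F' 0 ∈ M'.start) (hN' : F' N ∈ M'.accept) {zs : List (ℕ × ℕ)}
    (hzs : IsSaturatedCover x (fun a b => F a = F b) (fun a b => F' a = F' b) S S' 0 N zs) :
    ∃ f g : ℕ → List α, (∀ T, f T ∈ M.accepts) ∧ (∀ T, g T ∈ M'.accepts) ∧
      Absorbs f g ∧ Absorbs g f := by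
  obtain ⟨f, g, hf, hg, hfg, hgf⟩ :=
    exists_absorbs_of_isSaturatedCover hS hF hF' zs N.zero_le hzs
  exact ⟨f, g, fun T => ⟨F N, hN, NFA.mem_evalFrom_iff_exists.mpr ⟨F 0, h0, hf T⟩⟩,
    fun T => ⟨F' N, hN', NFA.mem_evalFrom_iff_exists.mpr ⟨F' 0, h0', hg T⟩⟩, hfg, hgf⟩

end Cover

section Factorization

variable [DecidableEq α]

/-- In the paper's cyclic factorizations, the gaps are the cycle factors and the cuts the letter
factors. -/
structure Factorization (x : ℕ → α) (S : Finset ℕ) (Γ : Finset α) (lo hi : ℕ) where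
  cuts : List ℕ
  gaps : List (ℕ × ℕ)
  sortedWithin : SortedWithin lo hi gaps
  missing : ∀ g ∈ gaps, ∃ γ ∈ Γ, γ ∉ subword x S g.1 g.2
  covers : ∀ p ∈ S, lo ≤ p → p < hi → p ∈ cuts ∨ ∃ g ∈ gaps, g.1 ≤ p ∧ p < g.2

variable {x : ℕ → α} {S : Finset ℕ} {Γ : Finset α} {s t hi : ℕ}

def Factorization.single (hshi : s ≤ hi) (h : ∃ γ ∈ Γ, γ ∉ subword x S s hi) :
    Factorization x S Γ s hi where
  cuts := []
  gaps := [(s, hi)]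
  sortedWithin := ⟨by simp, by simpa using hshi⟩
  missing := by simpa using h
  covers _ _ h1 h2 := Or.inr ⟨(s, hi), by simp, h1, h2⟩

def Factorization.cons (f : Factorization x S Γ (t + 1) hi) (hst : s ≤ t) (hthi : t < hi)
    (h : ∃ γ ∈ Γ, γ ∉ subword x S s t) : Factorization x S Γ s hi where
  cuts := t :: f.cuts
  gaps := (s, t) :: f.gaps
  sortedWithin := (f.sortedWithin.mono t.le_succ le_rfl).cons le_rfl hst hthi.le
  missing := by
    simp only [List.mem_cons, forall_eq_or_imp]
    exact ⟨h, f.missing⟩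
  covers p hp h1 h2 := by
    rcases lt_trichotomy p t with hpt | rfl | hpt
    · exact Or.inr ⟨(s, t), by simp, h1, hpt⟩
    · exact Or.inl (by simp)
    · rcases f.covers p hp hpt h2 with hp | ⟨g, hg, hpg⟩
      · exact Or.inl (by simp [hp])
      · exact Or.inr ⟨g, by simp [hg], hpg⟩

variable {M : NFA α σ} {n : ℕ} {F : ℕ → σ} {N lo : ℕ}

/-- The factorization is built greedily from `s`: the gap runs up to the first position of `S`
after the last return of the run to `F s`, and the transition at that cut enters a state not
visited before. `rest` holds the states left at earlier cuts, most recent first. -/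
theorem exists_factorization_aux (hM : DepthLE M n) (hF : IsLazyRun M x S F N) (hhi : hi ≤ N)
    (hno : ¬ HasCycle x (fun a b => F a = F b) S lo hi Γ) (d : ℕ) :
    ∀ s (rest : List σ), hi - s = d → lo ≤ s → s ≤ hi →
      (F s :: rest).IsChain (fun p q => ∃ c, p ∈ M.step q c) → (F s :: rest).Nodup →
      (∀ q ∈ rest, ∀ u, s ≤ u → u ≤ hi → F u ≠ q) →
      ∃ f : Factorization x S Γ s hi,
        f.gaps.length = f.cuts.length + 1 ∧ f.gaps.length + rest.length ≤ n := by
  induction d using Nat.strong_induction_on with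
  | _ d ih =>
  intro s rest hd hlo hshi hchain hnodup hfresh
  obtain ⟨j, hsj, hjhi, hj, hjmax⟩ := exists_greatest_le (fun u => F u = F s) hshi rfl
  have hmiss : ∀ t, j ≤ t → (∀ u, j ≤ u → u < t → u ∉ S) → ∃ γ ∈ Γ, γ ∉ subword x S s t := by
    intro t hjt hgap
    rw [← subword_append hsj hjt, subword_eq_nil hgap, List.append_nil]
    by_contra! h
    exact hno ⟨s, j, hlo, hsj, hjhi, hj.symm, h⟩
  by_cases hcut : ∃ t, t ∈ S ∧ j ≤ t ∧ t < hi
  · obtain ⟨htS, hjt, hthi⟩ := Nat.find_spec hcut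
    set t := Nat.find hcut
    have hgap : ∀ u, j ≤ u → u < t → u ∉ S := fun u h1 h2 huS =>
      Nat.find_min hcut h2 ⟨huS, h1, by omega⟩
    have hFt : F t = F s := (hF.eq_of_forall_notMem hjt (by omega) hgap).trans hj
    have hnew : ∀ u, t + 1 ≤ u → u ≤ hi → F u ≠ F s := fun u h1 h2 => hjmax u (by omega) h2
    obtain ⟨f, hcuts, hlen⟩ := ih (hi - (t + 1)) (by omega) (t + 1) (F s :: rest) rfl
      (by omega) (by omega)
      (List.isChain_cons_cons.mpr ⟨⟨x t, hFt ▸ (hF t (by omega)).1 htS⟩, hchain⟩)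
      (List.nodup_cons.mpr ⟨by
        simp only [List.mem_cons, not_or]
        exact ⟨hnew _ le_rfl (by omega), fun h => hfresh _ h _ (by omega) (by omega) rfl⟩,
        hnodup⟩)
      (by
        simp only [List.mem_cons, forall_eq_or_imp]
        exact ⟨hnew, fun q hq u h1 h2 => hfresh q hq u (by omega) h2⟩)
    refine ⟨f.cons (by omega) hthi (hmiss t hjt hgap), ?_, ?_⟩
    · simp [Factorization.cons, hcuts]
    · simp only [Factorization.cons, List.length_cons] at hlen ⊢
      omega
  · push Not at hcut
    have hpath := hM (F s :: rest).reverse (List.isChain_reverse.mpr hchain)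
      (List.nodup_reverse.mpr hnodup)
    refine ⟨.single hshi (hmiss hi hjhi fun u h1 h2 huS => absurd (hcut u huS h1) (by omega)),
      rfl, ?_⟩
    simp only [List.length_reverse, List.length_cons] at hpath
    simp only [Factorization.single, List.length_singleton]
    omega

theorem exists_factorization (hM : DepthLE M n) (hF : IsLazyRun M x S F N) (hhi : hi ≤ N)
    (hno : ¬ HasCycle x (fun a b => F a = F b) S lo hi Γ) :
    ∃ f : Factorization x S Γ lo hi, f.cuts.length < n ∧ f.gaps.length ≤ n := by
  by_cases hlohi : lo ≤ hi
  · obtain ⟨f, hcuts, hlen⟩ := exists_factorization_aux hM hF hhi hno _ lo [] rfl le_rfl hlohi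
      (List.isChain_singleton _) (List.nodup_singleton _) (by simp)
    exact ⟨f, by simp at hlen; omega, by simpa using hlen⟩
  · have := hM [F lo] (List.isChain_singleton _) (List.nodup_singleton _)
    exact ⟨⟨[], [], ⟨by simp, by simp⟩, by simp, fun p _ h1 h2 => by omega⟩, by simp at this; simpa,
      by simp⟩

end Factorization

section Counting

variable [DecidableEq α] {x : ℕ → α}

theorem exists_sortedWithin_of_forall_isSaturatedCover {R R' : ℕ → ℕ → Prop} {S S' : Finset ℕ}
    (gs : List (ℕ × ℕ)) {lo hi : ℕ} (hgs : SortedWithin lo hi gs)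
    (h : ∀ g ∈ gs, ∃ zs, IsSaturatedCover x R R' S S' g.1 g.2 zs) :
    ∃ zs, SortedWithin lo hi zs ∧ (∀ z ∈ zs, IsSaturated x R R' S S' z) ∧
      ∀ p ∈ S' \ S, (∃ g ∈ gs, g.1 ≤ p ∧ p < g.2) → ∃ z ∈ zs, z.1 ≤ p ∧ p < z.2 := by
  induction gs generalizing lo with
  | nil => exact ⟨[], ⟨by simp, by simp⟩, by simp, by simp⟩
  | cons g gs ih =>
    obtain ⟨hlo, hg, hhi, hgs⟩ := hgs.of_cons
    obtain ⟨zs₁, hsort₁, hsat₁, hcov₁⟩ := h g (by simp)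
    obtain ⟨zs₂, hsort₂, hsat₂, hcov₂⟩ := ih hgs fun g' hg' => h g' (by simp [hg'])
    refine ⟨zs₁ ++ zs₂, (hsort₁.append hsort₂ hg hhi).mono hlo le_rfl, ?_, ?_⟩
    · simp only [List.mem_append]
      rintro z (hz | hz)
      exacts [hsat₁ z hz, hsat₂ z hz]
    · rintro p hp ⟨g', hg', hpg'⟩
      rcases List.mem_cons.mp hg' with rfl | hg'
      · obtain ⟨z, hz, hpz⟩ := hcov₁ p hp hpg'.1 hpg'.2
        exact ⟨z, by simp [hz], hpz⟩
      · obtain ⟨z, hz, hpz⟩ := hcov₂ p hp ⟨g', hg', hpg'⟩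
        exact ⟨z, by simp [hz], hpz⟩

-- `Loop i a b`: the run on the `i`-th word is in the same state at positions `a` and `b`.
variable (x) (P : ℕ → Finset ℕ) (Loop : ℕ → ℕ → ℕ → Prop)

def IsCovered (i lo hi : ℕ) : Prop :=
  ∃ zs, IsSaturatedCover x (Loop i) (Loop (i + 1)) (P i) (P (i + 1)) lo hi zs

open scoped Classical in
noncomputable def badSteps (h lo hi : ℕ) : Finset ℕ :=
  (Finset.Ico 1 h).filter fun i =>
    (∃ p ∈ P (i + 1) \ P i, lo ≤ p ∧ p < hi) ∧ ¬ IsCovered x P Loop i lo hi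

variable {x P Loop}

theorem mem_badSteps {h lo hi i : ℕ} : i ∈ badSteps x P Loop h lo hi ↔
    (1 ≤ i ∧ i < h) ∧ (∃ p ∈ P (i + 1) \ P i, lo ≤ p ∧ p < hi) ∧ ¬ IsCovered x P Loop i lo hi := by
  simp [badSteps]

theorem subsingleton_setOf_mem_sdiff (hP : Monotone P) (p : ℕ) :
    {i | p ∈ P (i + 1) \ P i}.Subsingleton := by
  intro i (hi : p ∈ P (i + 1) \ P i) j (hj : p ∈ P (j + 1) \ P j)
  rw [Finset.mem_sdiff] at hi hj
  by_contra hij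
  rcases Nat.lt_or_gt_of_ne hij with hij | hij
  · exact hj.2 (hP (by omega) hi.1)
  · exact hi.2 (hP (by omega) hj.1)

theorem isCovered_of_hasCycle {i lo hi : ℕ} {Γ : Finset α}
    (h₀ : HasCycle x (Loop i) (P i) lo hi Γ) (h₁ : HasCycle x (Loop (i + 1)) (P (i + 1)) lo hi Γ)
    (hΓ : ∀ c ∈ subword x (P (i + 1)) lo hi, c ∈ Γ) : IsCovered x P Loop i lo hi := by
  have hlohi : lo ≤ hi := by
    obtain ⟨a, b, ha, hab, hb, -⟩ := h₀
    omega
  have hsub : (subword x (P (i + 1)) lo hi).toFinset ⊆ Γ := fun c hc =>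
    hΓ c (List.mem_toFinset.mp hc)
  exact ⟨[(lo, hi)], ⟨by simp, by simpa using hlohi⟩, by simpa using ⟨h₀.mono hsub, h₁.mono hsub⟩,
    fun p _ h1 h2 => ⟨(lo, hi), by simp, h1, h2⟩⟩

theorem isCovered_of_factorization {i τ lo hi : ℕ} {Γ : Finset α}
    (f : Factorization x (P τ) Γ lo hi) (hτ : P (i + 1) ⊆ P τ)
    (hcuts : ∀ p ∈ f.cuts, p ∉ P (i + 1) \ P i)
    (hgaps : ∀ g ∈ f.gaps, IsCovered x P Loop i g.1 g.2) : IsCovered x P Loop i lo hi := by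
  obtain ⟨zs, hsort, hsat, hcov⟩ :=
    exists_sortedWithin_of_forall_isSaturatedCover f.gaps f.sortedWithin hgaps
  refine ⟨zs, hsort, hsat, fun p hp h1 h2 => hcov p hp ?_⟩
  rcases f.covers p (hτ (Finset.mem_sdiff.mp hp).1) h1 h2 with hcut | hgap
  · exact absurd hp (hcuts p hcut)
  · exact hgap

theorem le_of_mem_badSteps (hP : Monotone P) {h τ lo hi i : ℕ} {Γ : Finset α}
    (hΓ : ∀ c ∈ subword x (P h) lo hi, c ∈ Γ)
    (hτ : ∀ j, τ < j → j ≤ h → HasCycle x (Loop j) (P j) lo hi Γ)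
    (hi : i ∈ badSteps x P Loop h lo hi) : i ≤ τ := by
  obtain ⟨⟨-, hih⟩, -, hncov⟩ := mem_badSteps.mp hi
  by_contra! hτi
  exact hncov (isCovered_of_hasCycle (hτ i hτi (by omega)) (hτ (i + 1) (by omega) hih)
    fun c hc => hΓ c (subword_subset_subword (hP hih) le_rfl le_rfl hc))

open scoped Classical in
theorem badSteps_subset (hP : Monotone P) {h τ lo hi : ℕ} {Γ : Finset α}
    (hΓ : ∀ c ∈ subword x (P h) lo hi, c ∈ Γ)
    (hτ : ∀ j, τ < j → j ≤ h → HasCycle x (Loop j) (P j) lo hi Γ)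
    (f : Factorization x (P τ) Γ lo hi) :
    badSteps x P Loop h lo hi ⊆ insert τ
      ((f.cuts.toFinset.biUnion fun p => (Finset.Ico 1 h).filter fun i => p ∈ P (i + 1) \ P i) ∪
        f.gaps.toFinset.biUnion fun g => badSteps x P Loop τ g.1 g.2) := by
  intro i hi
  have hiτ := le_of_mem_badSteps hP hΓ hτ hi
  obtain ⟨⟨h1i, hih⟩, -, hncov⟩ := mem_badSteps.mp hi
  rcases hiτ.eq_or_lt with rfl | hiτ
  · exact Finset.mem_insert_self _ _
  refine Finset.mem_insert_of_mem (by_contra fun hout => hncov ?_)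
  simp only [Finset.mem_union, Finset.mem_biUnion, List.mem_toFinset, Finset.mem_filter,
    Finset.mem_Ico, not_or, not_exists, not_and] at hout
  refine isCovered_of_factorization f (hP hiτ) (fun p hp hnew => hout.1 p hp ⟨h1i, hih⟩ hnew)
    fun g hg => ?_
  by_cases hnew : ∃ p ∈ P (i + 1) \ P i, g.1 ≤ p ∧ p < g.2
  · by_contra hg'
    exact hout.2 g hg (mem_badSteps.mpr ⟨⟨h1i, hiτ⟩, hnew, hg'⟩)
  · exact ⟨[], ⟨by simp, by simp⟩, by simp, fun p hp h1 h2 => absurd ⟨p, hp, h1, h2⟩ hnew⟩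

theorem card_badSteps_le_of_factorization (hP : Monotone P) {h τ lo hi n B : ℕ} {Γ : Finset α}
    (hΓ : ∀ c ∈ subword x (P h) lo hi, c ∈ Γ)
    (hτ : ∀ j, τ < j → j ≤ h → HasCycle x (Loop j) (P j) lo hi Γ)
    (f : Factorization x (P τ) Γ lo hi) (hcuts : f.cuts.length < n) (hgaps : f.gaps.length ≤ n)
    (hchild : ∀ g ∈ f.gaps, (badSteps x P Loop τ g.1 g.2).card ≤ B) :
    (badSteps x P Loop h lo hi).card ≤ n + n * B := by
  classical
  have hcutsteps : ∀ p ∈ f.cuts.toFinset,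
      ((Finset.Ico 1 h).filter fun i => p ∈ P (i + 1) \ P i).card ≤ 1 := fun p _ =>
    Finset.card_le_one.mpr fun i hi j hj =>
      subsingleton_setOf_mem_sdiff hP p (Finset.mem_filter.mp hi).2 (Finset.mem_filter.mp hj).2
  calc (badSteps x P Loop h lo hi).card
      ≤ _ := Finset.card_le_card (badSteps_subset hP hΓ hτ f)
    _ ≤ _ + 1 := Finset.card_insert_le _ _
    _ ≤ f.cuts.toFinset.card * 1 + f.gaps.toFinset.card * B + 1 := by
      gcongr
      exact (Finset.card_union_le _ _).trans (add_le_add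
        (Finset.card_biUnion_le_card_mul _ _ _ hcutsteps)
        (Finset.card_biUnion_le_card_mul _ _ _ fun g hg => hchild g (List.mem_toFinset.mp hg)))
    _ ≤ n + n * B := by
      have := f.cuts.toFinset_card_le
      have := Nat.mul_le_mul_right B ((f.gaps.toFinset_card_le).trans hgaps)
      omega

theorem sum_range_succ_pow_succ (n g : ℕ) :
    ∑ d ∈ Finset.range (g + 1), n ^ (d + 1) = n + n * ∑ d ∈ Finset.range g, n ^ (d + 1) := by
  rw [Finset.sum_range_succ', Finset.mul_sum, add_comm]
  simp [pow_succ']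

theorem card_badSteps_le (hP : Monotone P) {n r N : ℕ}
    (hfact : ∀ τ, 1 ≤ τ → τ ≤ r → ∀ lo hi Γ, hi ≤ N → ¬ HasCycle x (Loop τ) (P τ) lo hi Γ →
      ∃ f : Factorization x (P τ) Γ lo hi, f.cuts.length < n ∧ f.gaps.length ≤ n) (g : ℕ) :
    ∀ (Γ : Finset α) (h lo hi : ℕ), Γ.card ≤ g → h ≤ r → hi ≤ N →
      (∀ c ∈ subword x (P h) lo hi, c ∈ Γ) →
      (badSteps x P Loop h lo hi).card ≤ ∑ d ∈ Finset.range g, n ^ (d + 1) := by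
  induction g with
  | zero =>
    intro Γ h lo hi hcard _ _ hΓ
    rw [Nat.le_zero, Finset.card_eq_zero] at hcard
    subst hcard
    refine (Finset.card_eq_zero.mpr (Finset.eq_empty_of_forall_notMem fun i hi => ?_)).le
    obtain ⟨⟨-, hih⟩, ⟨p, hp, h1, h2⟩, -⟩ := mem_badSteps.mp hi
    simpa using hΓ (x p) (mem_subword.mpr ⟨p, hP hih (Finset.mem_sdiff.mp hp).1, h1, h2, rfl⟩)
  | succ g ih =>
    intro Γ h lo hi hcard hhr hhi hΓ
    by_cases hcyc : ∀ j, 1 ≤ j → j ≤ h → HasCycle x (Loop j) (P j) lo hi Γ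
    · refine (Finset.card_eq_zero.mpr (Finset.eq_empty_of_forall_notMem fun i hi => ?_)).le.trans
        (Nat.zero_le _)
      have := le_of_mem_badSteps hP hΓ hcyc hi
      have := (mem_badSteps.mp hi).1.1
      omega
    push Not at hcyc
    obtain ⟨j, h1j, hjh, hj⟩ := hcyc
    obtain ⟨τ, hjτ, hτh, hτ, hτmax⟩ :=
      exists_greatest_le (fun j => ¬ HasCycle x (Loop j) (P j) lo hi Γ) hjh hj
    obtain ⟨f, hcuts, hgaps⟩ := hfact τ (by omega) (by omega) lo hi Γ hhi hτ
    rw [sum_range_succ_pow_succ]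
    refine card_badSteps_le_of_factorization hP hΓ (fun j h1 h2 => not_not.mp (hτmax j h1 h2)) f
      hcuts hgaps fun gp hgp => ?_
    obtain ⟨γ, hγ, hγgp⟩ := f.missing gp hgp
    obtain ⟨hlo, -, hgphi⟩ := f.sortedWithin.2 gp hgp
    refine ih (Γ.erase γ) τ gp.1 gp.2 (by rw [Finset.card_erase_of_mem hγ]; omega) (by omega)
      (by omega) fun c hc => Finset.mem_erase.mpr ⟨fun e => hγgp (e ▸ hc), ?_⟩
    exact hΓ c (subword_subset_subword (hP hτh) hlo hgphi hc)

end Counting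

section Tower

theorem exists_positions [Nonempty α] (w : ℕ → List α) (r : ℕ)
    (hsub : ∀ i, 1 ≤ i → i < r → w i <+ w (i + 1)) :
    ∃ (x : ℕ → α) (N : ℕ) (P : ℕ → Finset ℕ),
      Monotone P ∧ ∀ i, 1 ≤ i → i ≤ r → w i = subword x (P i) 0 N := by
  set x : ℕ → α := fun t => (w r).getD t (Classical.arbitrary α)
  set N := (w r).length
  suffices ∀ k, ∃ P : ℕ → Finset ℕ,
      Monotone P ∧ ∀ i, r - k ≤ i → 1 ≤ i → i ≤ r → w i = subword x (P i) 0 N by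
    obtain ⟨P, hP, hw⟩ := this r
    exact ⟨x, N, P, hP, fun i h1 h2 => hw i (by omega) h1 h2⟩
  intro k
  induction k with
  | zero =>
    refine ⟨fun _ => Finset.range N, monotone_const, fun i h1 _ h2 => ?_⟩
    obtain rfl : i = r := by omega
    exact (subword_range_getD _ _).symm
  | succ k ih =>
    obtain ⟨P, hP, hw⟩ := ih
    by_cases hj : 1 ≤ r - (k + 1)
    · set j := r - (k + 1)
      obtain ⟨S, hS, hwj⟩ := exists_subset_of_sublist_subword
        ((hw (j + 1) (by omega) (by omega) (by omega)) ▸ hsub j hj (by omega))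
      refine ⟨fun i => if i ≤ j then S else P i, fun a b hab => ?_, fun i h1 h2 h3 => ?_⟩
      · dsimp only
        split_ifs with ha hb hb
        exacts [le_rfl, hS.trans (hP (by omega)), absurd (hab.trans hb) ha, hP hab]
      · dsimp only
        split_ifs with hij
        · rwa [show i = j by omega]
        · exact hw i (by omega) h2 h3
    · exact ⟨P, hP, fun i h1 h2 h3 => hw i (by omega) h2 h3⟩

theorem exists_acceptingRuns [Nonempty σ] (M : NFA α σ) (x : ℕ → α) (P : ℕ → Finset ℕ) (N : ℕ)
    (I : ℕ → Prop) (h : ∀ i, I i → subword x (P i) 0 N ∈ M.accepts) :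
    ∃ F : ℕ → ℕ → σ, ∀ i, I i →
      IsLazyRun M x (P i) (F i) N ∧ F i 0 ∈ M.start ∧ F i N ∈ M.accept := by
  have : ∀ i, ∃ F : ℕ → σ, I i → IsLazyRun M x (P i) F N ∧ F 0 ∈ M.start ∧ F N ∈ M.accept := by
    intro i
    by_cases hi : I i
    · obtain ⟨q, hq, hqF⟩ := h i hi
      obtain ⟨F, h0, hN, hF⟩ := exists_isLazyRun hqF
      exact ⟨F, fun _ => ⟨hF, h0, hN ▸ hq⟩⟩
    · exact ⟨fun _ => Classical.arbitrary σ, fun h => absurd h hi⟩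
  choose F hF using this
  exact ⟨F, hF⟩

variable [DecidableEq α] {σ0 σ1 : Type*} {A0 : NFA α σ0} {A1 : NFA α σ1} {x : ℕ → α}
  {P : ℕ → Finset ℕ} {N r : ℕ}

def altLoop (F0 : ℕ → ℕ → σ0) (F1 : ℕ → ℕ → σ1) (i : ℕ) : ℕ → ℕ → Prop :=
  if i % 2 = 0 then fun a b => F0 i a = F0 i b else fun a b => F1 i a = F1 i b

variable {F0 : ℕ → ℕ → σ0} {F1 : ℕ → ℕ → σ1}

theorem exists_factorization_altLoop {n : ℕ} (h0 : DepthLE A0 n) (h1 : DepthLE A1 n)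
    (hF0 : ∀ i, 1 ≤ i → i ≤ r → i % 2 = 0 → IsLazyRun A0 x (P i) (F0 i) N)
    (hF1 : ∀ i, 1 ≤ i → i ≤ r → i % 2 = 1 → IsLazyRun A1 x (P i) (F1 i) N) :
    ∀ τ, 1 ≤ τ → τ ≤ r → ∀ lo hi Γ, hi ≤ N → ¬ HasCycle x (altLoop F0 F1 τ) (P τ) lo hi Γ →
      ∃ f : Factorization x (P τ) Γ lo hi, f.cuts.length < n ∧ f.gaps.length ≤ n := by
  intro τ h1τ hτr lo hi Γ hhi hno
  unfold altLoop at hno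
  split_ifs at hno with hτ
  · exact exists_factorization h0 (hF0 τ h1τ hτr hτ) hhi hno
  · exact exists_factorization h1 (hF1 τ h1τ hτr (by omega)) hhi hno

theorem exists_infSubTower_of_isCovered (hP : Monotone P)
    (hF0 : ∀ i, 1 ≤ i → i ≤ r → i % 2 = 0 →
      IsLazyRun A0 x (P i) (F0 i) N ∧ F0 i 0 ∈ A0.start ∧ F0 i N ∈ A0.accept)
    (hF1 : ∀ i, 1 ≤ i → i ≤ r → i % 2 = 1 →
      IsLazyRun A1 x (P i) (F1 i) N ∧ F1 i 0 ∈ A1.start ∧ F1 i N ∈ A1.accept)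
    {i : ℕ} (h1i : 1 ≤ i) (hir : i < r) (hcov : IsCovered x P (altLoop F0 F1) i 0 N) :
    ∃ t, InfSubTower (A0.accepts : Set (List α)) (A1.accepts : Set (List α)) t := by
  obtain ⟨zs, hzs⟩ := hcov
  unfold altLoop at hzs
  rcases Nat.mod_two_eq_zero_or_one i with hi | hi
  · rw [if_pos hi, if_neg (by omega)] at hzs
    obtain ⟨hrun, hstart, hacc⟩ := hF0 i h1i hir.le hi
    obtain ⟨hrun', hstart', hacc'⟩ := hF1 (i + 1) (by omega) hir (by omega)
    obtain ⟨f, g, hf, hg, hfg, hgf⟩ := exists_accepted_absorbs_of_isSaturatedCover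
      (hP i.le_succ) hrun hrun' hstart hacc hstart' hacc' hzs
    exact exists_infSubTower_of_absorbs hf hg hfg hgf
  · rw [if_neg (by omega), if_pos (by omega)] at hzs
    obtain ⟨hrun, hstart, hacc⟩ := hF1 i h1i hir.le hi
    obtain ⟨hrun', hstart', hacc'⟩ := hF0 (i + 1) (by omega) hir (by omega)
    obtain ⟨f, g, hf, hg, hfg, hgf⟩ := exists_accepted_absorbs_of_isSaturatedCover
      (hP i.le_succ) hrun hrun' hstart hacc hstart' hacc' hzs
    exact exists_infSubTower_of_absorbs hg hf hgf hfg

theorem Ico_subset_badSteps (hno : ¬ ∃ t, InfSubTower (A0.accepts : Set (List α))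
      (A1.accepts : Set (List α)) t) (hP : Monotone P)
    (hmem : ∀ i, 1 ≤ i → i ≤ r → (i % 2 = 0 → subword x (P i) 0 N ∈ A0.accepts) ∧
      (i % 2 = 1 → subword x (P i) 0 N ∈ A1.accepts))
    (hF0 : ∀ i, 1 ≤ i → i ≤ r → i % 2 = 0 →
      IsLazyRun A0 x (P i) (F0 i) N ∧ F0 i 0 ∈ A0.start ∧ F0 i N ∈ A0.accept)
    (hF1 : ∀ i, 1 ≤ i → i ≤ r → i % 2 = 1 →
      IsLazyRun A1 x (P i) (F1 i) N ∧ F1 i 0 ∈ A1.start ∧ F1 i N ∈ A1.accept) :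
    Finset.Ico 1 r ⊆ badSteps x P (altLoop F0 F1) r 0 N := by
  intro i hi
  rw [Finset.mem_Ico] at hi
  refine mem_badSteps.mpr ⟨hi, by_contra fun hsame => ?_,
    fun hcov => hno (exists_infSubTower_of_isCovered hP hF0 hF1 hi.1 hi.2 hcov)⟩
  have heq : subword x (P i) 0 N = subword x (P (i + 1)) 0 N :=
    subword_congr fun t _ htN => ⟨(hP i.le_succ ·), fun ht => by_contra fun ht' =>
      hsame ⟨t, Finset.mem_sdiff.mpr ⟨ht, ht'⟩, by omega, htN⟩⟩
  rcases Nat.mod_two_eq_zero_or_one i with hpar | hpar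
  · exact hno ⟨_, infSubTower_const ((hmem i hi.1 hi.2.le).1 hpar)
      (heq ▸ (hmem (i + 1) (by omega) hi.2).2 (by omega))⟩
  · exact hno ⟨_, infSubTower_const (heq ▸ (hmem (i + 1) (by omega) hi.2).1 (by omega))
      ((hmem i hi.1 hi.2.le).2 hpar)⟩

end Tower

end TowerHeight

open TowerHeight in
/-- Theorem: if `A₀` and `A₁` are NFAs over an alphabet of cardinality `m`, both of
depth at most `n`, with no infinite alternating subsequence tower between their
languages, then every tower `w₁ ≼ w₂ ≼ ⋯ ≼ w_r` with `w_i ∈ L(A_{i mod 2})`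
satisfies `r ≤ (n^{m+1} − 1)/(n − 1) = ∑_{i=0}^{m} n^i`. -/
theorem tower_height_upper_bound {α σ0 σ1 : Type*} [Fintype α] (m n : ℕ)
    (hα : Fintype.card α = m)
    (A0 : NFA α σ0) (A1 : NFA α σ1)
    (h0 : DepthLE A0 n) (h1 : DepthLE A1 n)
    (hno : ¬ ∃ t : ℕ → List α,
      InfSubTower (A0.accepts : Set (List α)) (A1.accepts : Set (List α)) t)
    (r : ℕ) (w : ℕ → List α)
    (hsub : ∀ i, 1 ≤ i → i < r → (w i).Sublist (w (i + 1)))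
    (hmem : ∀ i, 1 ≤ i → i ≤ r →
      (i % 2 = 0 → w i ∈ (A0.accepts : Set (List α))) ∧
      (i % 2 = 1 → w i ∈ (A1.accepts : Set (List α)))) :
    r ≤ ∑ i ∈ Finset.range (m + 1), n ^ i := by
  classical
  rw [Finset.sum_range_succ', pow_zero]
  obtain hr | hr := Nat.lt_or_ge r 2
  · omega
  have hw0 := (hmem 2 (by omega) hr).1 rfl
  have hw1 := (hmem 1 le_rfl (by omega)).2 rfl
  have : Nonempty α := not_isEmpty_iff.mp fun _ =>
    hno ⟨_, infSubTower_const hw0 (Subsingleton.elim (w 1) (w 2) ▸ hw1)⟩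
  have : Nonempty σ0 := let ⟨q, _, _⟩ := hw0; ⟨q⟩
  have : Nonempty σ1 := let ⟨q, _, _⟩ := hw1; ⟨q⟩
  obtain ⟨x, N, P, hP, hw⟩ := exists_positions w r hsub
  have hmem' : ∀ i, 1 ≤ i → i ≤ r → (i % 2 = 0 → subword x (P i) 0 N ∈ A0.accepts) ∧
      (i % 2 = 1 → subword x (P i) 0 N ∈ A1.accepts) := fun i h1 h2 => hw i h1 h2 ▸ hmem i h1 h2
  obtain ⟨F0, hF0⟩ := exists_acceptingRuns A0 x P N (fun i => 1 ≤ i ∧ i ≤ r ∧ i % 2 = 0)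
    fun i hi => (hmem' i hi.1 hi.2.1).1 hi.2.2
  obtain ⟨F1, hF1⟩ := exists_acceptingRuns A1 x P N (fun i => 1 ≤ i ∧ i ≤ r ∧ i % 2 = 1)
    fun i hi => (hmem' i hi.1 hi.2.1).2 hi.2.2
  replace hF0 := fun i h1 h2 h3 => hF0 i ⟨h1, h2, h3⟩
  replace hF1 := fun i h1 h2 h3 => hF1 i ⟨h1, h2, h3⟩
  have hbad := card_badSteps_le hP (exists_factorization_altLoop h0 h1
    (fun i h1 h2 h3 => (hF0 i h1 h2 h3).1) (fun i h1 h2 h3 => (hF1 i h1 h2 h3).1)) m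
    Finset.univ r 0 N hα.le le_rfl le_rfl fun c _ => Finset.mem_univ c
  have hsteps := Finset.card_le_card (Ico_subset_badSteps hno hP hmem' hF0 hF1)
  rw [Nat.card_Ico] at hsteps
  omega
end

section
/- Let A be an NFA of depth n and let q' ∈ δ(q, w). Then w admits a cyclic factorization w = v₁ v₂ ⋯ v_k with respect to (q, q') containing at most n cycle factors and at most n − 1 letter factors; moreover, if w does not admit the trivial factorization (k = 1 with a cycle over alph(w)), then alph(v_i) ⊊ alph(w) for each cycle factor v_i. -/
/-- There is a path from `p` to `q` labelled `v` in `M` that contains a cycle over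
`alph(v)`: the path splits as `p →^x s →^z s →^y q` where `alph(z) = alph(v)`. -/
def HasCycleOver {α σ : Type*} (M : NFA α σ) (p : σ) (v : List α) (q : σ) : Prop :=
  ∃ (x z y : List α) (s : σ), v = x ++ z ++ y ∧
    {c | c ∈ z} = {c | c ∈ v} ∧
    s ∈ M.evalFrom {p} x ∧ s ∈ M.evalFrom {s} z ∧ q ∈ M.evalFrom {s} y

/-!
Cut a run from `q` to `q'` greedily: leave the current state `p` after the longest prefix that
returns to `p` and from which `q'` is still reachable, take one letter, and repeat. The pieces
alternate loop, letter, loop, …, loop, and the states at which the loops sit are pairwise distinct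
(a later visit of `p` would give a longer prefix returning to `p`). They form a simple path, so
there are at most `n` loops and `n - 1` letters. Each loop is an infix `w = x z y` of `w`, so a
loop `z` over all of `alph(w)` would be a cycle over `alph(w)` on the whole path.
-/

theorem List.flatten_map_range_succ_eq_cons {α : Type*} (f : ℕ → List α) (n : ℕ) :
    ((List.range (n + 1)).map f).flatten =
      f 0 ++ ((List.range n).map fun i => f (i + 1)).flatten := by
  rw [List.range_succ_eq_map, List.map_cons, List.map_map, List.flatten_cons]
  rfl

theorem Set.ncard_setOf_lt_two_mul_add_one_and_mod_two_eq_le (t r : ℕ) :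
    {i | i < 2 * t + 1 ∧ i % 2 = r}.ncard ≤ t + 1 - r :=
  calc _ ≤ (Set.Iio (t + 1 - r)).ncard :=
        Set.ncard_le_ncard_of_injOn (· / 2) (fun i hi => by simp at *; omega)
          (fun i hi j hj _ => by simp at *; omega) (Set.finite_Iio _)
    _ = t + 1 - r := Set.ncard_Iio_nat _

theorem hasCycleOver_of_mem_evalFrom_self {α σ : Type*} {M : NFA α σ} {p : σ} {v : List α}
    (h : p ∈ M.evalFrom {p} v) : HasCycleOver M p v p :=
  ⟨[], v, [], p, by simp, rfl, rfl, h, rfl⟩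

namespace NFA

variable {α σ : Type*} (M : NFA α σ)

theorem mem_evalFrom_cons_iff {p t : σ} {c : α} {y : List α} :
    t ∈ M.evalFrom {p} (c :: y) ↔ ∃ s ∈ M.step p c, t ∈ M.evalFrom {s} y := by
  rw [evalFrom_cons, stepSet_singleton, mem_evalFrom_iff_exists]

theorem mem_evalFrom_append_of_mem {p s t : σ} {x y : List α} (hx : s ∈ M.evalFrom {p} x)
    (hy : t ∈ M.evalFrom {s} y) : t ∈ M.evalFrom {p} (x ++ y) := by
  rw [evalFrom_append, mem_evalFrom_iff_exists]
  exact ⟨s, hx, hy⟩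

theorem exists_longest_loop_prefix {p p' : σ} {w : List α} (h : p' ∈ M.evalFrom {p} w) :
    ∃ x y, w = x ++ y ∧ p ∈ M.evalFrom {p} x ∧ p' ∈ M.evalFrom {p} y ∧
      ∀ x' y', w = x' ++ y' → p ∈ M.evalFrom {p} x' → p' ∈ M.evalFrom {p} y' →
        x'.length ≤ x.length := by
  classical
  let P i := p ∈ M.evalFrom {p} (w.take i) ∧ p' ∈ M.evalFrom {p} (w.drop i)
  have hP : P (Nat.findGreatest P w.length) :=
    Nat.findGreatest_spec (Nat.zero_le _) (by simpa [P] using h)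
  refine ⟨_, _, (w.take_append_drop (Nat.findGreatest P w.length)).symm, hP.1, hP.2, ?_⟩
  rintro x' y' rfl hx' hy'
  rw [List.length_take_of_le (Nat.findGreatest_le _)]
  exact Nat.le_findGreatest (by simp) (by simpa [P] using ⟨hx', hy'⟩)

structure LoopDecomposition (p : σ) (w : List α) (p' : σ) where
  len : ℕ
  state : ℕ → σ
  factor : ℕ → List α
  flatten_factor : ((List.range (2 * len + 1)).map factor).flatten = w
  state_zero : state 0 = p
  state_len : state len = p'
  loop : ∀ j ≤ len, state j ∈ M.evalFrom {state j} (factor (2 * j))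
  letter : ∀ j < len, ∃ c, factor (2 * j + 1) = [c] ∧ state (j + 1) ∈ M.step (state j) c
  injOn_state : Set.InjOn state (Set.Iic len)
  exists_split : ∀ j ≤ len, ∃ x y, w = x ++ factor (2 * j) ++ y ∧
    state j ∈ M.evalFrom {p} x ∧ p' ∈ M.evalFrom {state j} y

namespace LoopDecomposition

variable {M} {p p' : σ} {w : List α}

def ofLoop (h : p ∈ M.evalFrom {p} w) : M.LoopDecomposition p w p where
  len := 0
  state _ := p
  factor _ := w
  flatten_factor := by simp
  state_zero := rfl
  state_len := rfl
  loop _ _ := h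
  letter _ hj := absurd hj (Nat.not_lt_zero _)
  injOn_state i hi j hj _ := by rw [Set.mem_Iic, Nat.le_zero] at hi hj; rw [hi, hj]
  exists_split _ _ := ⟨[], [], by simp, rfl, rfl⟩

theorem mem_evalFrom (e : M.LoopDecomposition p w p') : p' ∈ M.evalFrom {p} w := by
  obtain ⟨x, y, hw, hx, hy⟩ := e.exists_split 0 (Nat.zero_le _)
  have hloop := e.loop 0 (Nat.zero_le _)
  rw [e.state_zero] at hx hy hloop
  rw [hw]
  exact M.mem_evalFrom_append_of_mem (M.mem_evalFrom_append_of_mem hx hloop) hy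

def cons {p₁ : σ} {c : α} {x : List α} (hx : p ∈ M.evalFrom {p} x) (hc : p₁ ∈ M.step p c)
    (e : M.LoopDecomposition p₁ w p') (hp : ∀ j ≤ e.len, e.state j ≠ p) :
    M.LoopDecomposition p (x ++ c :: w) p' where
  len := e.len + 1
  state
    | 0 => p
    | j + 1 => e.state j
  factor
    | 0 => x
    | 1 => [c]
    | i + 2 => e.factor i
  flatten_factor := by
    rw [show 2 * (e.len + 1) + 1 = 2 * e.len + 1 + 1 + 1 by ring,
      List.flatten_map_range_succ_eq_cons, List.flatten_map_range_succ_eq_cons, e.flatten_factor]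
    rfl
  state_zero := rfl
  state_len := e.state_len
  loop
    | 0, _ => hx
    | j + 1, hj => e.loop j (by omega)
  letter
    | 0, _ => ⟨c, rfl, show e.state 0 ∈ M.step p c by rw [e.state_zero]; exact hc⟩
    | j + 1, hj => e.letter j (by omega)
  injOn_state := by
    rintro (_ | i) hi (_ | j) hj hij
    · rfl
    · exact absurd hij.symm (hp j (by simp at hj; omega))
    · exact absurd hij (hp i (by simp at hi; omega))
    · exact congrArg (· + 1)
        (e.injOn_state (by simp at hi ⊢; omega) (by simp at hj ⊢; omega) hij)
  exists_split
    | 0, _ => ⟨[], c :: w, rfl, rfl, M.mem_evalFrom_cons_iff.2 ⟨p₁, hc, e.mem_evalFrom⟩⟩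
    | j + 1, hj => by
      obtain ⟨x', y', hw, hx', hy'⟩ := e.exists_split j (by omega)
      refine ⟨x ++ c :: x', y', show _ = _ ++ e.factor (2 * j) ++ _ by simp [hw], ?_, hy'⟩
      exact M.mem_evalFrom_append_of_mem hx (M.mem_evalFrom_cons_iff.2 ⟨p₁, hc, hx'⟩)

variable (e : M.LoopDecomposition p w p') {i : ℕ}

theorem len_lt {n : ℕ} (h : DepthLE M n) : e.len < n := by
  have hpath := h ((List.range (e.len + 1)).map e.state) ?_ ?_
  · simpa using hpath
  · rw [List.Chain', List.isChain_map, List.isChain_range_succ]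
    intro j hj
    obtain ⟨c, -, hc⟩ := e.letter j hj
    exact ⟨c, hc⟩
  · refine List.nodup_range.map_on fun i hi j hj hij => e.injOn_state ?_ ?_ hij <;>
      simp_all

theorem mem_evalFrom_factor (hi : i < 2 * e.len + 1) :
    e.state ((i + 1) / 2) ∈ M.evalFrom {e.state (i / 2)} (e.factor i) := by
  obtain ⟨j, rfl | rfl⟩ := Nat.even_or_odd' i
  · rw [show (2 * j + 1) / 2 = j by omega, show 2 * j / 2 = j by omega]
    exact e.loop j (by omega)
  · obtain ⟨c, hc, hstep⟩ := e.letter j (by omega)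
    rw [show (2 * j + 1 + 1) / 2 = j + 1 by omega, show (2 * j + 1) / 2 = j by omega, hc,
      evalFrom_singleton, stepSet_singleton]
    exact hstep

theorem exists_factor_eq_singleton_or_hasCycleOver (hi : i < 2 * e.len + 1) :
    (∃ c, e.factor i = [c]) ∨
      HasCycleOver M (e.state (i / 2)) (e.factor i) (e.state ((i + 1) / 2)) := by
  obtain ⟨j, rfl | rfl⟩ := Nat.even_or_odd' i
  · right
    have hloop := e.mem_evalFrom_factor hi
    rw [show (2 * j + 1) / 2 = 2 * j / 2 by omega] at hloop ⊢
    exact hasCycleOver_of_mem_evalFrom_self hloop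
  · left
    exact (e.letter j (by omega)).imp fun _ => And.left

theorem letter_factor_iff (hi : i < 2 * e.len + 1) :
    ((∃ c, e.factor i = [c]) ∧ e.state (i / 2) ≠ e.state ((i + 1) / 2)) ↔ i % 2 = 1 := by
  obtain ⟨j, rfl | rfl⟩ := Nat.even_or_odd' i
  · rw [show (2 * j + 1) / 2 = 2 * j / 2 by omega]
    simp
  · obtain ⟨c, hc, -⟩ := e.letter j (by omega)
    rw [show (2 * j + 1 + 1) / 2 = j + 1 by omega, show (2 * j + 1) / 2 = j by omega]
    refine iff_of_true ⟨⟨c, hc⟩, e.injOn_state.ne ?_ ?_ (by omega)⟩ (by omega) <;>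
      simp only [Set.mem_Iic] <;> omega

theorem alph_loop_ssubset (hw : ¬ HasCycleOver M p w p') {j : ℕ} (hj : j ≤ e.len) :
    {c | c ∈ e.factor (2 * j)} ⊂ {c | c ∈ w} := by
  obtain ⟨x, y, hxy, hx, hy⟩ := e.exists_split j hj
  have hsub : {c | c ∈ e.factor (2 * j)} ⊆ {c | c ∈ w} := fun c hc => by simp [hxy, hc.out]
  exact ⟨hsub, fun hsup => hw ⟨x, _, y, _, hxy, hsub.antisymm hsup, hx, e.loop j hj, hy⟩⟩

end LoopDecomposition

theorem nonempty_loopDecomposition {p p' : σ} {w : List α} (h : p' ∈ M.evalFrom {p} w) :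
    Nonempty (M.LoopDecomposition p w p') := by
  induction hn : w.length using Nat.strong_induction_on generalizing p w with
  | _ n ih =>
  obtain ⟨x, y, rfl, hx, hy, hmax⟩ := M.exists_longest_loop_prefix h
  cases y with
  | nil =>
    obtain rfl : p' = p := hy
    rw [List.append_nil]
    exact ⟨.ofLoop hx⟩
  | cons c y =>
    obtain ⟨p₁, hc, hy⟩ := M.mem_evalFrom_cons_iff.1 hy
    obtain ⟨e⟩ := ih y.length (by simp [← hn]; omega) hy rfl
    refine ⟨.cons hx hc e fun j hj hjp => ?_⟩
    obtain ⟨x', y', hsplit, hx', hy'⟩ := e.exists_split j hj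
    have hloop := e.loop j hj
    rw [hjp] at hx' hy' hloop
    have hlonger := hmax (x ++ c :: x') (e.factor (2 * j) ++ y') (by simp [hsplit])
      (M.mem_evalFrom_append_of_mem hx (M.mem_evalFrom_cons_iff.2 ⟨p₁, hc, hx'⟩))
      (M.mem_evalFrom_append_of_mem hloop hy')
    simp at hlonger

end NFA

theorem cyclic_factorization {α σ : Type*} (M : NFA α σ) (n : ℕ)
    (hdepth : DepthLE M n) (q q' : σ) (w : List α)
    (hpath : q' ∈ M.evalFrom {q} w) :
    ∃ (k : ℕ) (v : ℕ → List α) (qs : ℕ → σ),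
      -- `w = v₁ v₂ ⋯ v_k` along intermediate states `qs`
      ((List.range k).map v).flatten = w ∧
      qs 0 = q ∧ qs k = q' ∧
      (∀ i < k, qs (i + 1) ∈ M.evalFrom {qs i} (v i)) ∧
      -- each factor is a single letter or labels a path with a cycle over its alphabet
      (∀ i < k, (∃ c, v i = [c]) ∨ HasCycleOver M (qs i) (v i) (qs (i + 1))) ∧
      -- at most `n` cycle factors
      {i | i < k ∧ ¬ ((∃ c, v i = [c]) ∧ qs i ≠ qs (i + 1))}.ncard ≤ n ∧
      -- at most `n − 1` letter factors
      {i | i < k ∧ (∃ c, v i = [c]) ∧ qs i ≠ qs (i + 1)}.ncard ≤ n - 1 ∧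
      -- if `w` does not admit the trivial factorization with respect to `(q, q')`,
      -- every cycle factor uses a strict subalphabet of `alph(w)`
      (¬ HasCycleOver M q w q' →
        ∀ i < k, ¬ ((∃ c, v i = [c]) ∧ qs i ≠ qs (i + 1)) →
          {c | c ∈ v i} ⊂ {c | c ∈ w}) := by
  obtain ⟨e⟩ := M.nonempty_loopDecomposition hpath
  have hlen := e.len_lt hdepth
  refine ⟨2 * e.len + 1, e.factor, fun i => e.state (i / 2), e.flatten_factor,
    by simp only [Nat.zero_div, e.state_zero],
    by simp only [show (2 * e.len + 1) / 2 = e.len by omega, e.state_len],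
    fun i => e.mem_evalFrom_factor, fun i => e.exists_factor_eq_singleton_or_hasCycleOver,
    ?_, ?_, fun hw i hi hcyc => ?_⟩
  · calc _ = {i | i < 2 * e.len + 1 ∧ i % 2 = 0}.ncard := congrArg Set.ncard <| Set.ext fun i =>
          and_congr_right fun hi => not_congr (e.letter_factor_iff hi) |>.trans Nat.mod_two_ne_one
      _ ≤ n := (Set.ncard_setOf_lt_two_mul_add_one_and_mod_two_eq_le _ 0).trans (by omega)
  · calc _ = {i | i < 2 * e.len + 1 ∧ i % 2 = 1}.ncard := congrArg Set.ncard <| Set.ext fun i =>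
          and_congr_right fun hi => e.letter_factor_iff hi
      _ ≤ n - 1 := (Set.ncard_setOf_lt_two_mul_add_one_and_mod_two_eq_le _ 1).trans (by omega)
  · obtain ⟨j, rfl⟩ : ∃ j, i = 2 * j := ⟨i / 2, by
      have := (e.letter_factor_iff hi).not.1 hcyc
      omega⟩
    exact e.alph_loop_ssubset hw (by omega)
end
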